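/- arXiv:2103.15513 — 6 statements merged into one kernel-verified Lean document; each statement's English description precedes it below -/
import Mathlib

section
/- Let A, B, P, Q ∈ ℂ[[x,y]] and let γ(t) = (x(t), y(t)) with x(t), y(t) ∈ ℂ[[t]] of positive order and x(t) ≠ 0. Assume the separatrix condition A(γ(t))·x′(t) + B(γ(t))·y′(t) = 0, that B(γ(t)) ≠ 0, and that P(γ(t))·x′(t) + Q(γ(t))·y′(t) ≠ 0. Then ord_t((A·Q − B·P)(γ(t))) = (ord_t(B(γ(t))) − ord_t(x(t)) + 1) + ord_t(P(γ(t))·x′(t) + Q(γ(t))·y′(t)). In other words, the intersection multiplicity of the jacobian curve of F and G with an irreducible separatrix S of F equals μ₀(F,S) + τ₀(G,S). -/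
open scoped Classical

/-- Substitution of a pair of one-variable power series of positive order
(the components of a parametrized branch `γ(t) = (x(t), y(t))`) into a formal
power series in two variables: `h(γ(t)) = Σ_{i,j} h_{ij} x(t)^i y(t)^j`.
Since `x(t)` and `y(t)` have positive order, only the terms with `i + j ≤ n`
contribute to the coefficient of `t^n`. -/
noncomputable def substCurve (xt yt : PowerSeries ℂ) (h : MvPowerSeries (Fin 2) ℂ) :
    PowerSeries ℂ :=
  PowerSeries.mk fun n =>
    ∑ i ∈ Finset.range (n + 1), ∑ j ∈ Finset.range (n + 1),
      MvPowerSeries.coeff (Finsupp.single 0 i + Finsupp.single 1 j) h *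
        PowerSeries.coeff n (xt ^ i * yt ^ j)

namespace JacAux

open Finset PowerSeries

lemma le_order_pow (f : PowerSeries ℂ) (hf : 0 < f.order) (i : ℕ) :
    (i : ℕ∞) ≤ (f ^ i).order := by
  induction i with
  | zero => simp
  | succ i ih =>
      have h1 : (1 : ℕ∞) ≤ f.order := Order.one_le_iff_pos.mpr hf
      calc ((i + 1 : ℕ) : ℕ∞) = (i : ℕ∞) + 1 := by push_cast; rfl
        _ ≤ (f ^ i).order + f.order := add_le_add ih h1
        _ ≤ ((f ^ i) * f).order := PowerSeries.le_order_mul _ _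
        _ = (f ^ (i + 1)).order := by rw [← pow_succ]

lemma coeff_vanish {xt yt : PowerSeries ℂ} (hx0 : 0 < xt.order) (hy0 : 0 < yt.order)
    {i j n : ℕ} (h : n < i + j) :
    PowerSeries.coeff n (xt ^ i * yt ^ j) = 0 := by
  apply PowerSeries.coeff_of_lt_order
  calc (n : ℕ∞) < ((i + j : ℕ) : ℕ∞) := by exact_mod_cast h
    _ = (i : ℕ∞) + (j : ℕ∞) := by push_cast; rfl
    _ ≤ (xt ^ i).order + (yt ^ j).order :=
        add_le_add (le_order_pow xt hx0 i) (le_order_pow yt hy0 j)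
    _ ≤ _ := PowerSeries.le_order_mul _ _

lemma coeff_substCurve {xt yt : PowerSeries ℂ} (hx0 : 0 < xt.order) (hy0 : 0 < yt.order)
    (h : MvPowerSeries (Fin 2) ℂ) {n M : ℕ} (hM : n ≤ M) :
    PowerSeries.coeff n (substCurve xt yt h)
      = ∑ i ∈ range (M + 1), ∑ j ∈ range (M + 1),
          MvPowerSeries.coeff (Finsupp.single 0 i + Finsupp.single 1 j) h *
            PowerSeries.coeff n (xt ^ i * yt ^ j) := by
  rw [substCurve, PowerSeries.coeff_mk]
  have step1 : ∀ i : ℕ,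
      (∑ j ∈ range (n + 1),
        MvPowerSeries.coeff (Finsupp.single 0 i + Finsupp.single 1 j) h *
          PowerSeries.coeff n (xt ^ i * yt ^ j))
      = ∑ j ∈ range (M + 1),
          MvPowerSeries.coeff (Finsupp.single 0 i + Finsupp.single 1 j) h *
            PowerSeries.coeff n (xt ^ i * yt ^ j) := by
    intro i
    apply Finset.sum_subset (Finset.range_subset_range.mpr (by omega))
    intro j _ hj
    rw [coeff_vanish hx0 hy0 (by simp only [mem_range, not_lt] at hj; omega), mul_zero]
  rw [Finset.sum_congr rfl fun i _ => step1 i]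
  apply Finset.sum_subset (Finset.range_subset_range.mpr (by omega))
  intro i _ hi
  apply Finset.sum_eq_zero
  intro j _
  rw [coeff_vanish hx0 hy0 (by simp only [mem_range, not_lt] at hi; omega), mul_zero]

lemma comm5 (R : Finset ℕ) (T : ℕ → ℕ → ℕ → ℕ → ℕ → ℂ) :
    (∑ a ∈ R, ∑ b ∈ R, ∑ c ∈ R, ∑ d ∈ R, ∑ k ∈ R, T a b c d k)
      = ∑ k ∈ R, ∑ a ∈ R, ∑ b ∈ R, ∑ c ∈ R, ∑ d ∈ R, T a b c d k := by
  refine (Finset.sum_congr rfl fun a _ => Finset.sum_congr rfl fun b _ =>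
    Finset.sum_congr rfl fun c _ => Finset.sum_comm).trans ?_
  refine (Finset.sum_congr rfl fun a _ => Finset.sum_congr rfl fun b _ =>
    Finset.sum_comm).trans ?_
  refine (Finset.sum_congr rfl fun a _ => Finset.sum_comm).trans ?_
  exact Finset.sum_comm

lemma tri (n : ℕ) (φ : ℕ → ℕ → ℂ) (h0 : ∀ a i, n < i → φ a i = 0) :
    ∑ i ∈ range (n + 1), ∑ a ∈ range (i + 1), φ a i
      = ∑ a ∈ range (n + 1), ∑ c ∈ range (n + 1), φ a (a + c) := by
  have hR : ∑ a ∈ range (n + 1), ∑ c ∈ range (n + 1), φ a (a + c)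
      = ∑ p ∈ (range (n + 1) ×ˢ range (n + 1)).filter (fun p => p.1 + p.2 ≤ n),
          φ p.1 (p.1 + p.2) := by
    rw [← Finset.sum_product']
    rw [← Finset.sum_filter_add_sum_filter_not (range (n + 1) ×ˢ range (n + 1))
      (fun p => p.1 + p.2 ≤ n)]
    have h2 : ∑ p ∈ (range (n + 1) ×ˢ range (n + 1)).filter (fun p => ¬ p.1 + p.2 ≤ n),
        φ p.1 (p.1 + p.2) = 0 := by
      apply Finset.sum_eq_zero
      intro p hp
      simp only [mem_filter, mem_product, mem_range, not_le] at hp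
      exact h0 _ _ (by omega)
    rw [h2, add_zero]
  rw [hR, Finset.sum_sigma']
  refine Finset.sum_nbij' (i := fun s => (s.2, s.1 - s.2)) (j := fun p => ⟨p.1 + p.2, p.1⟩)
    ?_ ?_ ?_ ?_ ?_
  · rintro ⟨i, a⟩ hs
    simp only [mem_sigma, mem_range] at hs
    simp only [mem_filter, mem_product, mem_range]
    omega
  · rintro ⟨a, c⟩ hp
    simp only [mem_filter, mem_product, mem_range] at hp
    simp only [mem_sigma, mem_range]
    omega
  · rintro ⟨i, a⟩ hs
    simp only [mem_sigma, mem_range] at hs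
    simp only [Sigma.mk.inj_iff]
    exact ⟨by omega, heq_of_eq rfl⟩
  · rintro ⟨a, c⟩ hp
    simp
  · rintro ⟨i, a⟩ hs
    simp only [mem_sigma, mem_range] at hs
    simp only []
    rw [Nat.add_sub_cancel' (by omega)]

lemma quad (n : ℕ) (F G : ℕ → ℕ → ℂ) (C : ℕ → ℕ → ℕ → ℂ)
    (hvan : ∀ i j, n < i + j → C i j n = 0)
    (hconv : ∀ a b c d, (∑ k ∈ range (n + 1), C a b k * C c d (n - k)) = C (a + c) (b + d) n) :
    ∑ i ∈ range (n + 1), ∑ j ∈ range (n + 1),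
        (∑ a ∈ range (i + 1), ∑ b ∈ range (j + 1), F a b * G (i - a) (j - b)) * C i j n
      = ∑ k ∈ range (n + 1),
          (∑ a ∈ range (n + 1), ∑ b ∈ range (n + 1), F a b * C a b k) *
            (∑ c ∈ range (n + 1), ∑ d ∈ range (n + 1), G c d * C c d (n - k)) := by
  calc
    ∑ i ∈ range (n + 1), ∑ j ∈ range (n + 1),
        (∑ a ∈ range (i + 1), ∑ b ∈ range (j + 1), F a b * G (i - a) (j - b)) * C i j n
      = ∑ i ∈ range (n + 1), ∑ a ∈ range (i + 1), ∑ j ∈ range (n + 1),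
          ∑ b ∈ range (j + 1), F a b * G (i - a) (j - b) * C i j n := by
        simp only [Finset.sum_mul]
        exact Finset.sum_congr rfl fun i _ => Finset.sum_comm
    _ = ∑ a ∈ range (n + 1), ∑ c ∈ range (n + 1), ∑ j ∈ range (n + 1),
          ∑ b ∈ range (j + 1), F a b * G ((a + c) - a) (j - b) * C (a + c) j n := by
        refine tri n (fun a i => ∑ j ∈ range (n + 1),
          ∑ b ∈ range (j + 1), F a b * G (i - a) (j - b) * C i j n) ?_
        intro a i hi
        refine Finset.sum_eq_zero fun j _ => Finset.sum_eq_zero fun b _ => ?_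
        rw [hvan i j (by omega), mul_zero]
    _ = ∑ a ∈ range (n + 1), ∑ c ∈ range (n + 1), ∑ b ∈ range (n + 1),
          ∑ d ∈ range (n + 1), F a b * G ((a + c) - a) ((b + d) - b) * C (a + c) (b + d) n := by
        refine Finset.sum_congr rfl fun a _ => Finset.sum_congr rfl fun c _ => ?_
        refine tri n (fun b j => F a b * G ((a + c) - a) (j - b) * C (a + c) j n) ?_
        intro b j hj
        show F a b * G ((a + c) - a) (j - b) * C (a + c) j n = 0
        rw [hvan (a + c) j (by omega), mul_zero]
    _ = ∑ a ∈ range (n + 1), ∑ c ∈ range (n + 1), ∑ b ∈ range (n + 1),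
          ∑ d ∈ range (n + 1), F a b * G c d * C (a + c) (b + d) n := by
        simp only [Nat.add_sub_cancel_left]
    _ = ∑ a ∈ range (n + 1), ∑ c ∈ range (n + 1), ∑ b ∈ range (n + 1),
          ∑ d ∈ range (n + 1), ∑ k ∈ range (n + 1),
            (F a b * C a b k) * (G c d * C c d (n - k)) := by
        refine Finset.sum_congr rfl fun a _ => Finset.sum_congr rfl fun c _ =>
          Finset.sum_congr rfl fun b _ => Finset.sum_congr rfl fun d _ => ?_
        rw [← hconv a b c d, Finset.mul_sum]
        exact Finset.sum_congr rfl fun k _ => by ring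
    _ = ∑ k ∈ range (n + 1), ∑ a ∈ range (n + 1), ∑ c ∈ range (n + 1),
          ∑ b ∈ range (n + 1), ∑ d ∈ range (n + 1),
            (F a b * C a b k) * (G c d * C c d (n - k)) :=
        comm5 _ _
    _ = ∑ k ∈ range (n + 1),
          (∑ a ∈ range (n + 1), ∑ b ∈ range (n + 1), F a b * C a b k) *
            (∑ c ∈ range (n + 1), ∑ d ∈ range (n + 1), G c d * C c d (n - k)) := by
        refine Finset.sum_congr rfl fun k _ => ?_
        rw [Finset.sum_mul_sum]
        refine Finset.sum_congr rfl fun a _ => ?_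
        refine Finset.sum_congr rfl fun c _ => ?_
        rw [Finset.sum_mul_sum]

lemma fin2_decomp (m : Fin 2 →₀ ℕ) :
    Finsupp.single 0 (m 0) + Finsupp.single 1 (m 1) = m := by
  ext a
  fin_cases a <;> simp [Finsupp.single_apply]

lemma single_eval_00 (i j : ℕ) :
    ((Finsupp.single 0 i + Finsupp.single 1 j : Fin 2 →₀ ℕ)) 0 = i := by
  simp [Finsupp.single_apply]

lemma single_eval_11 (i j : ℕ) :
    ((Finsupp.single 0 i + Finsupp.single 1 j : Fin 2 →₀ ℕ)) 1 = j := by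
  simp [Finsupp.single_apply]

lemma mv_coeff_mul (f g : MvPowerSeries (Fin 2) ℂ) (i j : ℕ) :
    MvPowerSeries.coeff (Finsupp.single 0 i + Finsupp.single 1 j) (f * g)
      = ∑ a ∈ range (i + 1), ∑ b ∈ range (j + 1),
          MvPowerSeries.coeff (Finsupp.single 0 a + Finsupp.single 1 b) f *
            MvPowerSeries.coeff (Finsupp.single 0 (i - a) + Finsupp.single 1 (j - b)) g := by
  rw [MvPowerSeries.coeff_mul, ← Finset.sum_product']
  refine Finset.sum_nbij' (i := fun p => (p.1 0, p.1 1))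
    (j := fun q => (Finsupp.single 0 q.1 + Finsupp.single 1 q.2,
      Finsupp.single 0 (i - q.1) + Finsupp.single 1 (j - q.2))) ?_ ?_ ?_ ?_ ?_
  · rintro ⟨p1, p2⟩ hp
    rw [Finset.HasAntidiagonal.mem_antidiagonal] at hp
    have h0 : p1 0 + p2 0 = i := by
      have := congrArg (fun m => m 0) hp
      simpa [single_eval_00] using this
    have h1 : p1 1 + p2 1 = j := by
      have := congrArg (fun m => m 1) hp
      simpa [single_eval_11] using this
    simp only [mem_product, mem_range]
    omega
  · rintro ⟨a, b⟩ hq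
    simp only [mem_product, mem_range] at hq
    rw [Finset.HasAntidiagonal.mem_antidiagonal]
    ext x
    fin_cases x <;> simp [Finsupp.single_apply] <;> omega
  · rintro ⟨p1, p2⟩ hp
    rw [Finset.HasAntidiagonal.mem_antidiagonal] at hp
    have h0 : p1 0 + p2 0 = i := by
      have := congrArg (fun m => m 0) hp
      simpa [single_eval_00] using this
    have h1 : p1 1 + p2 1 = j := by
      have := congrArg (fun m => m 1) hp
      simpa [single_eval_11] using this
    simp only [Prod.mk.injEq]
    constructor
    · exact fin2_decomp p1
    · have e0 : i - p1 0 = p2 0 := by omega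
      have e1 : j - p1 1 = p2 1 := by omega
      rw [e0, e1]
      exact fin2_decomp p2
  · rintro ⟨a, b⟩ hq
    simp [single_eval_00, single_eval_11]
  · rintro ⟨p1, p2⟩ hp
    rw [Finset.HasAntidiagonal.mem_antidiagonal] at hp
    have h0 : p1 0 + p2 0 = i := by
      have := congrArg (fun m => m 0) hp
      simpa [single_eval_00] using this
    have h1 : p1 1 + p2 1 = j := by
      have := congrArg (fun m => m 1) hp
      simpa [single_eval_11] using this
    simp only []
    congr 1
    · rw [fin2_decomp p1]
    · have e0 : i - p1 0 = p2 0 := by omega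
      have e1 : j - p1 1 = p2 1 := by omega
      rw [e0, e1, fin2_decomp p2]

lemma conv_coeff (xt yt : PowerSeries ℂ) (a b c d n : ℕ) :
    (∑ k ∈ range (n + 1),
        PowerSeries.coeff k (xt ^ a * yt ^ b) *
          PowerSeries.coeff (n - k) (xt ^ c * yt ^ d))
      = PowerSeries.coeff n (xt ^ (a + c) * yt ^ (b + d)) := by
  rw [show xt ^ (a + c) * yt ^ (b + d) = (xt ^ a * yt ^ b) * (xt ^ c * yt ^ d) by ring,
    PowerSeries.coeff_mul, Finset.Nat.sum_antidiagonal_eq_sum_range_succ_mk]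

lemma substCurve_mul {xt yt : PowerSeries ℂ} (hx0 : 0 < xt.order) (hy0 : 0 < yt.order)
    (f g : MvPowerSeries (Fin 2) ℂ) :
    substCurve xt yt (f * g) = substCurve xt yt f * substCurve xt yt g := by
  ext n
  rw [PowerSeries.coeff_mul, Finset.Nat.sum_antidiagonal_eq_sum_range_succ_mk]
  rw [Finset.sum_congr rfl (fun k hk => by
    rw [coeff_substCurve hx0 hy0 f (M := n) (by simp only [mem_range] at hk; omega),
      coeff_substCurve hx0 hy0 g (M := n) (by omega)])]
  rw [coeff_substCurve hx0 hy0 (f * g) (le_refl n)]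
  rw [Finset.sum_congr rfl (fun i _ => Finset.sum_congr rfl fun j _ => by
    rw [mv_coeff_mul])]
  exact quad n
    (fun a b => MvPowerSeries.coeff (Finsupp.single 0 a + Finsupp.single 1 b) f)
    (fun c d => MvPowerSeries.coeff (Finsupp.single 0 c + Finsupp.single 1 d) g)
    (fun i j k => PowerSeries.coeff k (xt ^ i * yt ^ j))
    (fun i j h => coeff_vanish hx0 hy0 h)
    (fun a b c d => conv_coeff xt yt a b c d n)

lemma substCurve_sub (xt yt : PowerSeries ℂ) (f g : MvPowerSeries (Fin 2) ℂ) :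
    substCurve xt yt (f - g) = substCurve xt yt f - substCurve xt yt g := by
  ext n
  simp [substCurve, sub_mul, Finset.sum_sub_distrib]

lemma order_neg (f : PowerSeries ℂ) : (-f).order = f.order := by
  rcases eq_or_ne f 0 with rfl | hf
  · simp
  apply le_antisymm
  · apply PowerSeries.le_order
    intro i hi
    have h := PowerSeries.coeff_of_lt_order (φ := -f) i hi
    rw [map_neg, neg_eq_zero] at h
    exact h
  · apply PowerSeries.le_order
    intro i hi
    rw [map_neg, PowerSeries.coeff_of_lt_order i hi, neg_zero]

lemma order_derivativeFun (f : PowerSeries ℂ) (hf : f ≠ 0) (h0 : 0 < f.order) :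
    f.derivativeFun.order + 1 = f.order := by
  have hfin : f.order ≠ ⊤ := fun h => hf (PowerSeries.order_eq_top.mp h)
  obtain ⟨n, hn⟩ := WithTop.ne_top_iff_exists.mp hfin
  rw [← hn]
  obtain ⟨hne, hlt⟩ := PowerSeries.order_eq_nat.mp hn.symm
  have hn1 : 1 ≤ n := by
    by_contra h
    have : n = 0 := by omega
    subst this
    have : (PowerSeries.coeff 0) f = 0 := by
      apply PowerSeries.coeff_of_lt_order
      exact_mod_cast h0
    exact hne this
  have hder : f.derivativeFun.order = (n - 1 : ℕ) := by
    rw [PowerSeries.order_eq_nat]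
    constructor
    · rw [show f.derivativeFun = PowerSeries.derivative ℂ f from rfl, PowerSeries.coeff_derivative]
      have hidx : (n - 1) + 1 = n := by omega
      rw [hidx]
      apply mul_ne_zero hne
      rw [show ((n - 1 : ℕ) : ℂ) + 1 = ((n : ℕ) : ℂ) from by
        exact_mod_cast congrArg (Nat.cast : ℕ → ℂ) hidx]
      exact Nat.cast_ne_zero.mpr (by omega)
    · intro i hi
      rw [show f.derivativeFun = PowerSeries.derivative ℂ f from rfl, PowerSeries.coeff_derivative]
      rw [hlt (i + 1) (by omega), zero_mul]
  rw [hder]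
  have hidx2 : (n - 1) + 1 = n := by omega
  calc ((n - 1 : ℕ) : ℕ∞) + 1 = (((n - 1) + 1 : ℕ) : ℕ∞) := by push_cast; ring
    _ = (n : ℕ∞) := by rw [hidx2]

end JacAux

/-- If `γ` is a separatrix of the foliation `ω = A dx + B dy`
(with `x(t) ≠ 0`, `B(γ(t)) ≠ 0`) and is not invariant for `η = P dx + Q dy`,
then the intersection multiplicity of the jacobian curve `A·Q − B·P = 0` with `γ`
equals `μ₀(F,γ) + τ₀(G,γ)`, i.e.
`ord_t((AQ−BP)(γ)) = (ord_t(B(γ)) − ord_t(x) + 1) + ord_t(P(γ)x′ + Q(γ)y′)`,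
stated additively (all orders involved are finite). -/
theorem order_jacobian_eval_separatrix
    (A B P Q : MvPowerSeries (Fin 2) ℂ) (xt yt : PowerSeries ℂ)
    (hx0 : 0 < xt.order) (hy0 : 0 < yt.order) (hx : xt ≠ 0)
    (hsep : substCurve xt yt A * xt.derivativeFun
        + substCurve xt yt B * yt.derivativeFun = 0)
    (hB : substCurve xt yt B ≠ 0)
    (htau : substCurve xt yt P * xt.derivativeFun
        + substCurve xt yt Q * yt.derivativeFun ≠ 0) :
    (substCurve xt yt (A * Q - B * P)).order + xt.order =
      (substCurve xt yt B).order + 1 +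
        (substCurve xt yt P * xt.derivativeFun
          + substCurve xt yt Q * yt.derivativeFun).order := by
  set SA := substCurve xt yt A
  set SB := substCurve xt yt B
  set SP := substCurve xt yt P
  set SQ := substCurve xt yt Q
  set τ := SP * xt.derivativeFun + SQ * yt.derivativeFun with hτ
  set J := substCurve xt yt (A * Q - B * P) with hJdef
  have hJ : J = SA * SQ - SB * SP := by
    rw [hJdef, JacAux.substCurve_sub, JacAux.substCurve_mul hx0 hy0,
      JacAux.substCurve_mul hx0 hy0]
  have key : J * xt.derivativeFun = -(SB * τ) := by
    rw [hJ, hτ]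
    linear_combination SQ * hsep
  -- nonvanishing
  have hSBτ : SB * τ ≠ 0 := mul_ne_zero hB htau
  have hdx : xt.derivativeFun.order + 1 = xt.order :=
    JacAux.order_derivativeFun xt hx hx0
  have hdxne : xt.derivativeFun ≠ 0 := by
    intro h
    rw [h] at hdx
    simp only [PowerSeries.order_zero] at hdx
    have : xt.order = ⊤ := by
      rw [← hdx]
      rfl
    exact hx (PowerSeries.order_eq_top.mp this)
  have hJne : J ≠ 0 := by
    intro h
    rw [h, zero_mul] at key
    exact hSBτ (by rw [← neg_neg (SB * τ), ← key, neg_zero])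
  have e1 : J.order + xt.derivativeFun.order = SB.order + τ.order := by
    have := congrArg PowerSeries.order key
    rw [PowerSeries.order_mul, JacAux.order_neg, PowerSeries.order_mul] at this
    exact this
  calc J.order + xt.order = J.order + (xt.derivativeFun.order + 1) := by rw [hdx]
    _ = (J.order + xt.derivativeFun.order) + 1 := by rw [add_assoc]
    _ = (SB.order + τ.order) + 1 := by rw [e1]
    _ = SB.order + 1 + τ.order := by
        rw [add_right_comm]
end

section
/- Let A be a (commutative) integral domain and let P ∈ A[y] be a monic polynomial of degree d. Let p be a positive integer dividing d such that p·1 is invertible in A. Then there exists a unique monic polynomial Q ∈ A[y] of degree d/p such that the degree of P − Q^p is strictly less than d − d/p. (Q is called the p-th approximate root of P.) -/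
open Polynomial Finset

private lemma approx_step {A : Type*} [CommRing A] [IsDomain A]
    (p e : ℕ) (hp : 0 < p) (hunit : IsUnit (p : A))
    (P : Polynomial A) (hP : P.Monic) (hd : P.natDegree = p * e) :
    ∀ j, j ≤ e → ∃ Q : Polynomial A, Q.Monic ∧ Q.natDegree = e ∧
      (P - Q ^ p).degree < ((p * e - j : ℕ) : WithBot ℕ) := by
  intro j
  induction j with
  | zero =>
    intro _
    refine ⟨X ^ e, monic_X_pow e, natDegree_X_pow e, ?_⟩
    have hdeg : P.degree = ((p * e : ℕ) : WithBot ℕ) := by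
      rw [degree_eq_natDegree hP.ne_zero, hd]
    have hxep : ((X : Polynomial A) ^ e) ^ p = X ^ (p * e) := by
      rw [← pow_mul, mul_comm]
    rw [Nat.sub_zero, hxep]
    have h := degree_sub_lt (p := P) (q := (X : Polynomial A) ^ (p * e)) ?_ hP.ne_zero ?_
    · rwa [hdeg] at h
    · rw [hdeg, degree_X_pow]
    · rw [hP.leadingCoeff, (monic_X_pow (p * e)).leadingCoeff]
  | succ j ih =>
    intro hje
    obtain ⟨Q, hQm, hQd, hR⟩ := ih (by omega)
    set R := P - Q ^ p with hRdef
    set N := p * e - (j + 1) with hNdef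
    set m := e - (j + 1) with hmdef
    have hje' : j + 1 ≤ e := hje
    have hme : m + (j + 1) = e := by omega
    have hpe : e ≤ p * e := Nat.le_mul_of_pos_left e hp
    have hNe : N + (j + 1) = p * e := by omega
    have hNm : N = m + (p - 1) * e := by
      have h1 : (p - 1) * e + e = p * e := by
        rw [Nat.sub_mul, one_mul]
        omega
      omega
    set c : A := ↑hunit.unit⁻¹ * R.coeff N with hc
    have hpc : (p : A) * c = R.coeff N := by
      rw [hc, ← mul_assoc, hunit.mul_val_inv, one_mul]
    set T : Polynomial A := C c * X ^ m with hT
    -- Q' = Q + T is monic of degree e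
    have hQdeg : Q.degree = (e : WithBot ℕ) := by
      rw [degree_eq_natDegree hQm.ne_zero, hQd]
    have hTdeg : T.degree < Q.degree := by
      refine lt_of_le_of_lt (degree_C_mul_X_pow_le m c) ?_
      rw [hQdeg]
      exact_mod_cast (by omega : m < e)
    have hQ'm : (Q + T).Monic := hQm.add_of_left hTdeg
    have hQ'd : (Q + T).natDegree = e := by
      have := degree_add_eq_left_of_degree_lt hTdeg
      rw [hQdeg] at this
      exact natDegree_eq_of_degree_eq_some this
    refine ⟨Q + T, hQ'm, hQ'd, ?_⟩
    -- expand the power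
    have hexp : (Q + T) ^ p =
        (∑ k ∈ range p, Q ^ k * T ^ (p - k) * ((p.choose k : ℕ) : Polynomial A)) + Q ^ p := by
      rw [add_pow, Finset.sum_range_succ]
      simp
    set S : Polynomial A :=
      ∑ k ∈ range p, Q ^ k * T ^ (p - k) * ((p.choose k : ℕ) : Polynomial A) with hS
    have hsub : P - (Q + T) ^ p = R - S := by
      rw [hexp, hRdef]; ring
    rw [hsub, degree_lt_iff_coeff_zero]
    intro b hb
    have hb' : N ≤ b := by exact_mod_cast hb
    -- natDegree bound for each term
    have hterm : ∀ k, (Q ^ k * T ^ (p - k) * ((p.choose k : ℕ) : Polynomial A)).natDegree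
        ≤ k * e + m * (p - k) := by
      intro k
      refine le_trans natDegree_mul_le (le_trans (Nat.add_le_add_right natDegree_mul_le _) ?_)
      have h1 : (Q ^ k).natDegree = k * e := by rw [hQm.natDegree_pow, hQd]
      have h2 : (T ^ (p - k)).natDegree ≤ m * (p - k) := by
        refine le_trans natDegree_pow_le ?_
        have : T.natDegree ≤ m := by
          refine le_trans natDegree_mul_le ?_
          simp [natDegree_C, natDegree_X_pow]
        calc (p - k) * T.natDegree ≤ (p - k) * m := Nat.mul_le_mul_left _ this
          _ = m * (p - k) := Nat.mul_comm _ _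
      have h3 : (((p.choose k : ℕ) : Polynomial A)).natDegree = 0 := natDegree_natCast _
      omega
    have harith : ∀ k, k < p → k * e + m * (p - k) + (p - k) * (j + 1) = p * e := by
      intro k hk
      calc k * e + m * (p - k) + (p - k) * (j + 1)
          = k * e + (p - k) * (m + (j + 1)) := by ring
        _ = k * e + (p - k) * e := by rw [hme]
        _ = (k + (p - k)) * e := by ring
        _ = p * e := by rw [Nat.add_sub_cancel' hk.le]
    -- terms with k < p - 1 vanish at b ≥ N
    have hsmall : ∀ k, k < p - 1 →
        (Q ^ k * T ^ (p - k) * ((p.choose k : ℕ) : Polynomial A)).coeff b = 0 := by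
      intro k hk
      refine coeff_eq_zero_of_natDegree_lt (lt_of_le_of_lt (hterm k) ?_)
      have h1 := harith k (by omega)
      have h2 : 2 * (j + 1) ≤ (p - k) * (j + 1) :=
        Nat.mul_le_mul_right _ (by omega)
      omega
    -- split off the k = p - 1 term
    obtain ⟨q, rfl⟩ : ∃ q, p = q + 1 := ⟨p - 1, by omega⟩
    have hScoeff : S.coeff b =
        (Q ^ q * T ^ (q + 1 - q) * (((q + 1).choose q : ℕ) : Polynomial A)).coeff b := by
      rw [hS, finset_sum_coeff, Finset.sum_range_succ]
      have : ∀ k ∈ range q,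
          (Q ^ k * T ^ ((q + 1) - k) * (((q + 1).choose k : ℕ) : Polynomial A)).coeff b = 0 := by
        intro k hk
        exact hsmall k (by simpa using Finset.mem_range.mp hk)
      rw [Finset.sum_eq_zero this, zero_add]
    -- the top term's coefficient
    have hQq : (Q ^ q).natDegree = q * e := by rw [hQm.natDegree_pow, hQd]
    have htop : (Q ^ q * T ^ (q + 1 - q) * (((q + 1).choose q : ℕ) : Polynomial A)).coeff b =
        c * (Q ^ q).coeff (b - m) * ((q + 1 : ℕ) : A) := by
      have hch : (q + 1).choose q = q + 1 := Nat.choose_succ_self_right q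
      rw [show q + 1 - q = 1 from by omega, pow_one, hT, hch]
      have : Q ^ q * (C c * X ^ m) * ((q + 1 : ℕ) : Polynomial A)
          = (C c * Q ^ q) * X ^ m * C ((q + 1 : ℕ) : A) := by
        rw [← C_eq_natCast]
        ring
      rw [this, coeff_mul_C, coeff_mul_X_pow']
      have hmb : m ≤ b := by omega
      rw [if_pos hmb, coeff_C_mul]
    rcases eq_or_lt_of_le hb' with hbe | hblt
    · -- b = N : coefficients cancel
      have hbm : b - m = q * e := by
        have h2 : N = m + q * e := by simpa using hNm
        have h3 : N = b := hbe
        omega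
      rw [coeff_sub, hScoeff, htop, hbm, ← hQq, (hQm.pow q).coeff_natDegree]
      have hRb : R.coeff b = ((q + 1 : ℕ) : A) * c := by
        rw [← hbe]; exact hpc.symm
      rw [hRb]; ring
    · -- b > N : everything vanishes
      have hRb : R.coeff b = 0 := by
        refine coeff_eq_zero_of_degree_lt (lt_of_lt_of_le hR ?_)
        have : (q + 1) * e - j = N + 1 := by omega
        rw [this]
        exact_mod_cast (by omega : N + 1 ≤ b)
      have hSb : S.coeff b = 0 := by
        rw [hScoeff]
        refine coeff_eq_zero_of_natDegree_lt (lt_of_le_of_lt (hterm q) ?_)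
        have h1 := harith q (by omega)
        have h2 : (j + 1) ≤ ((q + 1) - q) * (j + 1) := by simp
        omega
      rw [coeff_sub, hRb, hSb, sub_zero]

private lemma approx_unique {A : Type*} [CommRing A] [IsDomain A]
    (p e : ℕ) (hp : 0 < p) (hunit : IsUnit (p : A))
    (P Q₁ Q₂ : Polynomial A) (h1m : Q₁.Monic) (h1d : Q₁.natDegree = e)
    (h2m : Q₂.Monic) (h2d : Q₂.natDegree = e)
    (hd1 : (P - Q₁ ^ p).degree < (((p - 1) * e : ℕ) : WithBot ℕ))
    (hd2 : (P - Q₂ ^ p).degree < (((p - 1) * e : ℕ) : WithBot ℕ)) :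
    Q₁ = Q₂ := by
  by_contra hne
  have hD : Q₁ - Q₂ ≠ 0 := sub_ne_zero_of_ne hne
  set G : Polynomial A := ∑ i ∈ range p, Q₁ ^ i * Q₂ ^ (p - 1 - i) with hG
  have hfac : G * (Q₁ - Q₂) = Q₁ ^ p - Q₂ ^ p := geom_sum₂_mul Q₁ Q₂ p
  -- coefficient of G at (p-1)*e is p
  have hterm : ∀ i ∈ range p, (Q₁ ^ i * Q₂ ^ (p - 1 - i)).coeff ((p - 1) * e) = 1 := by
    intro i hi
    have hi' : i < p := Finset.mem_range.mp hi
    have hmon : (Q₁ ^ i * Q₂ ^ (p - 1 - i)).Monic := (h1m.pow i).mul (h2m.pow _)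
    have hnd : (Q₁ ^ i * Q₂ ^ (p - 1 - i)).natDegree = (p - 1) * e := by
      rw [natDegree_mul (h1m.pow i).ne_zero (h2m.pow _).ne_zero,
        h1m.natDegree_pow, h2m.natDegree_pow, h1d, h2d, ← Nat.add_mul]
      congr 1
      omega
    rw [← hnd]
    exact hmon.coeff_natDegree
  have hGc : G.coeff ((p - 1) * e) = (p : A) := by
    rw [hG, finset_sum_coeff, Finset.sum_congr rfl hterm]
    simp
  have hpne : (p : A) ≠ 0 := hunit.ne_zero
  have hG0 : G ≠ 0 := by
    intro h
    rw [h] at hGc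
    simp at hGc
    exact hpne hGc.symm
  have hGle : G.natDegree ≤ (p - 1) * e := by
    refine natDegree_sum_le_of_forall_le _ _ ?_
    intro i hi
    have hi' : i < p := Finset.mem_range.mp hi
    refine le_trans natDegree_mul_le ?_
    rw [h1m.natDegree_pow, h2m.natDegree_pow, h1d, h2d, ← Nat.add_mul]
    have : i + (p - 1 - i) ≤ p - 1 := by omega
    exact Nat.mul_le_mul_right _ this
  have hGge : (p - 1) * e ≤ G.natDegree := le_natDegree_of_ne_zero (hGc ▸ hpne)
  have hGnd : G.natDegree = (p - 1) * e := le_antisymm hGle hGge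
  -- degree of Q₁^p - Q₂^p is < (p-1)*e
  have hdiff : (Q₁ ^ p - Q₂ ^ p).degree < (((p - 1) * e : ℕ) : WithBot ℕ) := by
    have : Q₁ ^ p - Q₂ ^ p = (P - Q₂ ^ p) - (P - Q₁ ^ p) := by ring
    rw [this]
    exact lt_of_le_of_lt (degree_sub_le _ _) (max_lt hd2 hd1)
  -- but it equals G * (Q₁ - Q₂) which has degree ≥ (p-1)*e
  have hmul0 : G * (Q₁ - Q₂) ≠ 0 := mul_ne_zero hG0 hD
  have : (p - 1) * e ≤ (G * (Q₁ - Q₂)).natDegree := by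
    rw [natDegree_mul hG0 hD, hGnd]
    omega
  have hle : (((p - 1) * e : ℕ) : WithBot ℕ) ≤ (G * (Q₁ - Q₂)).degree := by
    rw [degree_eq_natDegree hmul0]
    exact_mod_cast this
  rw [hfac] at hle
  exact absurd hdiff (not_lt_of_ge hle)

/-- **Abhyankar–Moh.** Let `A` be an integral domain and `P ∈ A[y]` a
monic polynomial of degree `d`. If `p` is a positive integer dividing `d` such that
`p·1` is invertible in `A`, then there is a unique monic polynomial `Q ∈ A[y]` of
degree `d/p` such that `deg (P − Q^p) < d − d/p` (the `p`-th approximate root of `P`;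
the zero polynomial has degree `⊥ < n` for every `n`). -/
theorem approximate_root_exists_unique {A : Type*} [CommRing A] [IsDomain A]
    (P : Polynomial A) (hP : P.Monic) (d p : ℕ) (hd : P.natDegree = d)
    (hp : 0 < p) (hdvd : p ∣ d) (hunit : IsUnit (p : A)) :
    ∃! Q : Polynomial A, Q.Monic ∧ Q.natDegree = d / p ∧
      (P - Q ^ p).degree < ((d - d / p : ℕ) : WithBot ℕ) := by
  obtain ⟨e, rfl⟩ := hdvd
  have hde : p * e / p = e := Nat.mul_div_cancel_left e hp
  have hsub : p * e - p * e / p = (p - 1) * e := by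
    rw [hde, Nat.sub_mul, one_mul]
  obtain ⟨Q, hQm, hQd, hQdeg⟩ :=
    approx_step p e hp hunit P hP hd e le_rfl
  have hQdeg' : (P - Q ^ p).degree < (((p - 1) * e : ℕ) : WithBot ℕ) := by
    have : p * e - e = (p - 1) * e := by
      rw [Nat.sub_mul, one_mul]
    rwa [this] at hQdeg
  refine ⟨Q, ⟨hQm, by rw [hde]; exact hQd, by rw [hsub]; exact hQdeg'⟩, ?_⟩
  rintro Q' ⟨h'm, h'd, h'deg⟩
  rw [hsub] at h'deg
  rw [hde] at h'd
  exact approx_unique p e hp hunit P Q' Q h'm h'd hQm hQd h'deg hQdeg'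
end

section
/- Let r, s ≥ 1, λ ∈ ℂ^r, μ ∈ ℂ^s, and let p ≥ 1 be an integer. Assume ord(αᵢ) ≥ p for all i = 1,…,r and ord(β_j) ≥ p for all j = 1,…,s, and let aᵢ (resp. b_j) denote the coefficient of x^p in αᵢ (resp. in β_j). Then x^{p(r+s−1)−1} divides J(x, x^p y) in ℂ[[x]][y], and the quotient H(x,y) = J(x, x^p y)/x^{p(r+s−1)−1} satisfies H(0,y) = p·[ (Σ_{i=1}^r λᵢ) · Σ_{j=1}^s μ_j ∏_{i'=1}^r (y − a_{i'}) ∏_{k≠j} (y − b_k) − (Σ_{j=1}^s μ_j) · Σ_{i=1}^r λᵢ ∏_{i'≠i} (y − a_{i'}) ∏_{k=1}^s (y − b_k) ]. (This is the computation of the strict transform of the jacobian of two logarithmic foliations at the first bifurcation divisor, of valuation p, in the proof of the multiplicity theorem for the jacobian curve.) -/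
open Finset

private lemma psDerivXpow (n : ℕ) :
    PowerSeries.derivativeFun ((PowerSeries.X : PowerSeries ℂ) ^ (n + 1)) =
      ((n : PowerSeries ℂ) + 1) * PowerSeries.X ^ n := by
  induction n with
  | zero =>
    simp only [pow_one, pow_zero, mul_one, Nat.cast_zero, zero_add]
    exact PowerSeries.derivative_X (R := ℂ)
  | succ k ih =>
    have h : (PowerSeries.X : PowerSeries ℂ) ^ (k + 2) = PowerSeries.X ^ (k+1) * PowerSeries.X := by
      ring
    rw [h, PowerSeries.derivativeFun_mul, ih]
    have hX : PowerSeries.derivativeFun (PowerSeries.X : PowerSeries ℂ) = 1 :=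
      PowerSeries.derivative_X (R := ℂ)
    rw [hX]
    simp only [smul_eq_mul]
    push_cast
    ring

private lemma psDerivShift (p : ℕ) (hp : 1 ≤ p) (f : PowerSeries ℂ) :
    PowerSeries.derivativeFun ((PowerSeries.X : PowerSeries ℂ) ^ p * f) =
      PowerSeries.X ^ (p - 1) *
        ((p : PowerSeries ℂ) * f + PowerSeries.X * PowerSeries.derivativeFun f) := by
  obtain ⟨q, rfl⟩ : ∃ q, p = q + 1 := ⟨p - 1, by omega⟩
  rw [PowerSeries.derivativeFun_mul, psDerivXpow]
  simp only [smul_eq_mul, Nat.add_sub_cancel]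
  push_cast
  ring

private lemma keySum {R : Type*} [CommRing R] {ι : Type*} [Fintype ι] [DecidableEq ι]
    (c v : ι → R) :
    ∑ i, Polynomial.C (c i * v i) * ∏ j ∈ univ.erase i, (Polynomial.X - Polynomial.C (v j)) =
      Polynomial.X * (∑ i, Polynomial.C (c i) *
          ∏ j ∈ univ.erase i, (Polynomial.X - Polynomial.C (v j))) -
        Polynomial.C (∑ i, c i) * ∏ j, (Polynomial.X - Polynomial.C (v j)) := by
  rw [Finset.mul_sum, map_sum, Finset.sum_mul, ← Finset.sum_sub_distrib]
  refine Finset.sum_congr rfl fun i _ => ?_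
  have h : (∏ j, (Polynomial.X - Polynomial.C (v j))) =
      (Polynomial.X - Polynomial.C (v i)) *
        ∏ j ∈ univ.erase i, (Polynomial.X - Polynomial.C (v j)) :=
    (Finset.mul_prod_erase univ _ (mem_univ i)).symm
  rw [h, map_mul]
  ring

private lemma compSum {n : ℕ} (p : ℕ) (c : Fin n → PowerSeries ℂ)
    (g gt : Fin n → PowerSeries ℂ) (hg : ∀ j, g j = PowerSeries.X ^ p * gt j) :
    (∑ i, Polynomial.C (c i) *
        ∏ j ∈ univ.erase i, (Polynomial.X - Polynomial.C (g j))).comp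
      (Polynomial.C ((PowerSeries.X : PowerSeries ℂ) ^ p) * Polynomial.X) =
    Polynomial.C ((PowerSeries.X : PowerSeries ℂ) ^ (p * (n - 1))) *
      ∑ i, Polynomial.C (c i) *
        ∏ j ∈ univ.erase i, (Polynomial.X - Polynomial.C (gt j)) := by
  rw [Polynomial.sum_comp, Finset.mul_sum]
  refine Finset.sum_congr rfl fun i _ => ?_
  rw [Polynomial.mul_comp, Polynomial.C_comp, Polynomial.prod_comp]
  have hfac : ∀ j ∈ univ.erase i,
      (Polynomial.X - Polynomial.C (g j)).comp
          (Polynomial.C ((PowerSeries.X : PowerSeries ℂ) ^ p) * Polynomial.X) =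
        Polynomial.C ((PowerSeries.X : PowerSeries ℂ) ^ p) *
          (Polynomial.X - Polynomial.C (gt j)) := by
    intro j _
    rw [Polynomial.sub_comp, Polynomial.X_comp, Polynomial.C_comp, hg j, mul_sub, ← map_mul]
  rw [Finset.prod_congr rfl hfac, Finset.prod_mul_distrib, Finset.prod_const,
    Finset.card_erase_of_mem (mem_univ i), Finset.card_univ, Fintype.card_fin,
    ← map_pow, ← pow_mul]
  ring

private lemma mapSum {n : ℕ} (ε : PowerSeries ℂ →+* ℂ) (c : Fin n → PowerSeries ℂ)
    (v : Fin n → PowerSeries ℂ) :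
    (∑ i, Polynomial.C (c i) *
        ∏ j ∈ univ.erase i, (Polynomial.X - Polynomial.C (v j))).map ε =
      ∑ i, Polynomial.C (ε (c i)) *
        ∏ j ∈ univ.erase i, (Polynomial.X - Polynomial.C (ε (v j))) := by
  rw [Polynomial.map_sum]
  refine Finset.sum_congr rfl fun i _ => ?_
  rw [Polynomial.map_mul, Polynomial.map_C, Polynomial.map_prod]
  simp [Polynomial.map_sub]

/-- For the logarithmic 1-forms `ω_λ = A dx + B dy`,
`η_μ = P dx + Q dy` associated to `αᵢ, λᵢ` and `β_j, μ_j`, if all `αᵢ`, `β_j` have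
order `≥ p`, then `x^{p(r+s−1)−1}` divides `J(x, x^p y)` in `ℂ⟦x⟧[y]`, where
`J = A·Q − B·P`, and the quotient `H` satisfies
`H(0,y) = p·[(Σλᵢ)·Σ_j μ_j ∏_{i'}(y−a_{i'}) ∏_{k≠j}(y−b_k)
          − (Σμ_j)·Σᵢ λᵢ ∏_{i'≠i}(y−a_{i'}) ∏_k(y−b_k)]`,
with `aᵢ`, `b_j` the coefficients of `x^p` in `αᵢ`, `β_j`. -/
theorem jacobian_strict_transform_first_bifurcation
    (r s : ℕ) (hr : 1 ≤ r) (hs : 1 ≤ s) (p : ℕ) (hp : 1 ≤ p)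
    (lam : Fin r → ℂ) (mu : Fin s → ℂ)
    (α : Fin r → PowerSeries ℂ) (β : Fin s → PowerSeries ℂ)
    (hα : ∀ i, (p : ℕ∞) ≤ (α i).order) (hβ : ∀ j, (p : ℕ∞) ≤ (β j).order)
    (a : Fin r → ℂ) (ha : ∀ i, a i = PowerSeries.coeff p (α i))
    (b : Fin s → ℂ) (hb : ∀ j, b j = PowerSeries.coeff p (β j))
    (A B P Q : Polynomial (PowerSeries ℂ))
    (hA : A = -∑ i, Polynomial.C (PowerSeries.C (lam i) * (α i).derivativeFun) *
        ∏ j ∈ Finset.univ.erase i, (Polynomial.X - Polynomial.C (α j)))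
    (hB : B = ∑ i, Polynomial.C (PowerSeries.C (lam i)) *
        ∏ j ∈ Finset.univ.erase i, (Polynomial.X - Polynomial.C (α j)))
    (hP : P = -∑ j, Polynomial.C (PowerSeries.C (mu j) * (β j).derivativeFun) *
        ∏ k ∈ Finset.univ.erase j, (Polynomial.X - Polynomial.C (β k)))
    (hQ : Q = ∑ j, Polynomial.C (PowerSeries.C (mu j)) *
        ∏ k ∈ Finset.univ.erase j, (Polynomial.X - Polynomial.C (β k)))
    (J : Polynomial (PowerSeries ℂ)) (hJ : J = A * Q - B * P) :
    ∃ H : Polynomial (PowerSeries ℂ),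
      J.comp (Polynomial.C ((PowerSeries.X : PowerSeries ℂ) ^ p) * Polynomial.X) =
        Polynomial.C ((PowerSeries.X : PowerSeries ℂ) ^ (p * (r + s - 1) - 1)) * H ∧
      H.map (PowerSeries.constantCoeff) =
        Polynomial.C ((p : ℂ)) *
          (Polynomial.C (∑ i, lam i) *
              ∑ j, Polynomial.C (mu j) *
                ((∏ i', (Polynomial.X - Polynomial.C (a i'))) *
                  ∏ k ∈ Finset.univ.erase j, (Polynomial.X - Polynomial.C (b k)))
            - Polynomial.C (∑ j, mu j) *
              ∑ i, Polynomial.C (lam i) *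
                ((∏ i' ∈ Finset.univ.erase i, (Polynomial.X - Polynomial.C (a i'))) *
                  ∏ k, (Polynomial.X - Polynomial.C (b k)))) := by
  classical
  have hαd : ∀ i, ∃ g, α i = PowerSeries.X ^ p * g := by
    intro i
    have hdvd : (PowerSeries.X : PowerSeries ℂ) ^ p ∣ α i := by
      rw [PowerSeries.X_pow_dvd_iff]
      intro m hm
      exact PowerSeries.coeff_of_lt_order m (lt_of_lt_of_le (by exact_mod_cast hm) (hα i))
    obtain ⟨g, hg⟩ := hdvd
    exact ⟨g, hg⟩
  have hβd : ∀ j, ∃ g, β j = PowerSeries.X ^ p * g := by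
    intro j
    have hdvd : (PowerSeries.X : PowerSeries ℂ) ^ p ∣ β j := by
      rw [PowerSeries.X_pow_dvd_iff]
      intro m hm
      exact PowerSeries.coeff_of_lt_order m (lt_of_lt_of_le (by exact_mod_cast hm) (hβ j))
    obtain ⟨g, hg⟩ := hdvd
    exact ⟨g, hg⟩
  choose αt hαt using hαd
  choose βt hβt using hβd
  -- the four building blocks
  set Sα : Polynomial (PowerSeries ℂ) := ∑ i, Polynomial.C (PowerSeries.C (lam i)) *
      ∏ j ∈ univ.erase i, (Polynomial.X - Polynomial.C (αt j)) with hSα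
  set Tα : Polynomial (PowerSeries ℂ) := ∑ i, Polynomial.C (PowerSeries.C (lam i) *
        ((p : PowerSeries ℂ) * αt i + PowerSeries.X * PowerSeries.derivativeFun (αt i))) *
      ∏ j ∈ univ.erase i, (Polynomial.X - Polynomial.C (αt j)) with hTα
  set Sβ : Polynomial (PowerSeries ℂ) := ∑ j, Polynomial.C (PowerSeries.C (mu j)) *
      ∏ k ∈ univ.erase j, (Polynomial.X - Polynomial.C (βt k)) with hSβ
  set Tβ : Polynomial (PowerSeries ℂ) := ∑ j, Polynomial.C (PowerSeries.C (mu j) *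
        ((p : PowerSeries ℂ) * βt j + PowerSeries.X * PowerSeries.derivativeFun (βt j))) *
      ∏ k ∈ univ.erase j, (Polynomial.X - Polynomial.C (βt k)) with hTβ
  refine ⟨Sα * Tβ - Tα * Sβ, ?_, ?_⟩
  · -- Part 1 : the division statement
    have hsumα : ∑ i, Polynomial.C (PowerSeries.C (lam i) * (α i).derivativeFun) *
        ∏ j ∈ univ.erase i, (Polynomial.X - Polynomial.C (αt j)) =
        Polynomial.C ((PowerSeries.X : PowerSeries ℂ) ^ (p - 1)) * Tα := by
      rw [hTα, Finset.mul_sum]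
      refine Finset.sum_congr rfl fun i _ => ?_
      rw [hαt i, psDerivShift p hp, mul_left_comm, map_mul]
      ring
    have hsumβ : ∑ j, Polynomial.C (PowerSeries.C (mu j) * (β j).derivativeFun) *
        ∏ k ∈ univ.erase j, (Polynomial.X - Polynomial.C (βt k)) =
        Polynomial.C ((PowerSeries.X : PowerSeries ℂ) ^ (p - 1)) * Tβ := by
      rw [hTβ, Finset.mul_sum]
      refine Finset.sum_congr rfl fun j _ => ?_
      rw [hβt j, psDerivShift p hp, mul_left_comm, map_mul]
      ring
    have hAc : A.comp (Polynomial.C ((PowerSeries.X : PowerSeries ℂ) ^ p) * Polynomial.X) =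
        -(Polynomial.C ((PowerSeries.X : PowerSeries ℂ) ^ (p * (r - 1))) *
          (Polynomial.C ((PowerSeries.X : PowerSeries ℂ) ^ (p - 1)) * Tα)) := by
      rw [hA, Polynomial.neg_comp, compSum p _ α αt hαt, hsumα]
    have hPc : P.comp (Polynomial.C ((PowerSeries.X : PowerSeries ℂ) ^ p) * Polynomial.X) =
        -(Polynomial.C ((PowerSeries.X : PowerSeries ℂ) ^ (p * (s - 1))) *
          (Polynomial.C ((PowerSeries.X : PowerSeries ℂ) ^ (p - 1)) * Tβ)) := by
      rw [hP, Polynomial.neg_comp, compSum p _ β βt hβt, hsumβ]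
    have hBc : B.comp (Polynomial.C ((PowerSeries.X : PowerSeries ℂ) ^ p) * Polynomial.X) =
        Polynomial.C ((PowerSeries.X : PowerSeries ℂ) ^ (p * (r - 1))) * Sα := by
      rw [hB, compSum p _ α αt hαt, hSα]
    have hQc : Q.comp (Polynomial.C ((PowerSeries.X : PowerSeries ℂ) ^ p) * Polynomial.X) =
        Polynomial.C ((PowerSeries.X : PowerSeries ℂ) ^ (p * (s - 1))) * Sβ := by
      rw [hQ, compSum p _ β βt hβt, hSβ]
    have hexp : ((PowerSeries.X : PowerSeries ℂ) ^ (p * (r + s - 1) - 1)) =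
        PowerSeries.X ^ (p * (r - 1)) * (PowerSeries.X ^ (p - 1) * PowerSeries.X ^ (p * (s - 1))) := by
      rw [← pow_add, ← pow_add]
      congr 1
      obtain ⟨r', rfl⟩ : ∃ r', r = r' + 1 := ⟨r - 1, by omega⟩
      obtain ⟨s', rfl⟩ : ∃ s', s = s' + 1 := ⟨s - 1, by omega⟩
      have h1 : p * (r' + 1 + (s' + 1) - 1) = p * r' + p * s' + p := by
        have h : r' + 1 + (s' + 1) - 1 = r' + s' + 1 := by omega
        rw [h]; ring
      have h2 : p * (r' + 1 - 1) = p * r' := by norm_num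
      have h3 : p * (s' + 1 - 1) = p * s' := by norm_num
      omega
    rw [hJ, Polynomial.sub_comp, Polynomial.mul_comp, Polynomial.mul_comp,
      hAc, hQc, hBc, hPc, hexp, map_mul, map_mul]
    ring
  · -- Part 2 : the value at x = 0
    have hεα : ∀ j, (PowerSeries.constantCoeff) (αt j) = a j := by
      intro j
      rw [ha j, hαt j]
      simpa using (PowerSeries.coeff_X_pow_mul (αt j) p 0).symm
    have hεβ : ∀ k, (PowerSeries.constantCoeff) (βt k) = b k := by
      intro k
      rw [hb k, hβt k]
      simpa using (PowerSeries.coeff_X_pow_mul (βt k) p 0).symm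
    have hmSα : Sα.map (PowerSeries.constantCoeff) =
        ∑ i, Polynomial.C (lam i) *
          ∏ j ∈ univ.erase i, (Polynomial.X - Polynomial.C (a j)) := by
      rw [hSα, mapSum]
      simp [hεα]
    have hmSβ : Sβ.map (PowerSeries.constantCoeff) =
        ∑ j, Polynomial.C (mu j) *
          ∏ k ∈ univ.erase j, (Polynomial.X - Polynomial.C (b k)) := by
      rw [hSβ, mapSum]
      simp [hεβ]
    have hmTα : Tα.map (PowerSeries.constantCoeff) =
        ∑ i, Polynomial.C (((p : ℂ) * lam i) * a i) *
          ∏ j ∈ univ.erase i, (Polynomial.X - Polynomial.C (a j)) := by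
      rw [hTα, mapSum]
      refine Finset.sum_congr rfl fun i _ => ?_
      simp only [map_mul, map_add, map_natCast, PowerSeries.constantCoeff_C,
        PowerSeries.constantCoeff_X, zero_mul, add_zero, hεα]
      ring
    have hmTβ : Tβ.map (PowerSeries.constantCoeff) =
        ∑ j, Polynomial.C (((p : ℂ) * mu j) * b j) *
          ∏ k ∈ univ.erase j, (Polynomial.X - Polynomial.C (b k)) := by
      rw [hTβ, mapSum]
      refine Finset.sum_congr rfl fun j _ => ?_
      simp only [map_mul, map_add, map_natCast, PowerSeries.constantCoeff_C,
        PowerSeries.constantCoeff_X, zero_mul, add_zero, hεβ]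
      ring
    rw [Polynomial.map_sub, Polynomial.map_mul, Polynomial.map_mul,
      hmSα, hmSβ, hmTα, hmTβ, keySum, keySum]
    -- pull out the constants
    have hpullα : ∑ i, Polynomial.C ((p : ℂ) * lam i) *
        ∏ j ∈ univ.erase i, (Polynomial.X - Polynomial.C (a j)) =
        Polynomial.C ((p : ℂ)) * ∑ i, Polynomial.C (lam i) *
          ∏ j ∈ univ.erase i, (Polynomial.X - Polynomial.C (a j)) := by
      rw [Finset.mul_sum]
      refine Finset.sum_congr rfl fun i _ => ?_
      rw [map_mul]; ring
    have hpullβ : ∑ j, Polynomial.C ((p : ℂ) * mu j) *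
        ∏ k ∈ univ.erase j, (Polynomial.X - Polynomial.C (b k)) =
        Polynomial.C ((p : ℂ)) * ∑ j, Polynomial.C (mu j) *
          ∏ k ∈ univ.erase j, (Polynomial.X - Polynomial.C (b k)) := by
      rw [Finset.mul_sum]
      refine Finset.sum_congr rfl fun j _ => ?_
      rw [map_mul]; ring
    have hcα : Polynomial.C (∑ i, (p : ℂ) * lam i) =
        Polynomial.C ((p : ℂ)) * Polynomial.C (∑ i, lam i) := by
      rw [← map_mul, ← Finset.mul_sum]
    have hcβ : Polynomial.C (∑ j, (p : ℂ) * mu j) =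
        Polynomial.C ((p : ℂ)) * Polynomial.C (∑ j, mu j) := by
      rw [← map_mul, ← Finset.mul_sum]
    have hr1 : ∑ j, Polynomial.C (mu j) *
        ((∏ i', (Polynomial.X - Polynomial.C (a i'))) *
          ∏ k ∈ univ.erase j, (Polynomial.X - Polynomial.C (b k))) =
        (∏ i', (Polynomial.X - Polynomial.C (a i'))) *
          ∑ j, Polynomial.C (mu j) *
            ∏ k ∈ univ.erase j, (Polynomial.X - Polynomial.C (b k)) := by
      rw [Finset.mul_sum]
      refine Finset.sum_congr rfl fun j _ => ?_
      ring
    have hr2 : ∑ i, Polynomial.C (lam i) *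
        ((∏ i' ∈ univ.erase i, (Polynomial.X - Polynomial.C (a i'))) *
          ∏ k, (Polynomial.X - Polynomial.C (b k))) =
        (∑ i, Polynomial.C (lam i) *
            ∏ j ∈ univ.erase i, (Polynomial.X - Polynomial.C (a j))) *
          ∏ k, (Polynomial.X - Polynomial.C (b k)) := by
      rw [Finset.sum_mul]
      refine Finset.sum_congr rfl fun i _ => ?_
      ring
    rw [hpullα, hpullβ, hcα, hcβ, hr1, hr2]
    ring
end

section
/- Let r, s ≥ 1, λ ∈ ℂ^r, μ ∈ ℂ^s, and let p ≥ 1 be an integer. Suppose {1,…,r} = I₁ ⊔ I₂ and {1,…,s} = J₁ ⊔ J₂ with I₁ ∪ J₁ ≠ ∅, where ord(αᵢ) ≥ p for i ∈ I₁; ord(αᵢ) = nᵢ with 1 ≤ nᵢ < p for i ∈ I₂; ord(β_j) ≥ p for j ∈ J₁; and ord(β_j) = o_j with 1 ≤ o_j < p for j ∈ J₂. For i ∈ I₁ and j ∈ J₁ let aᵢ and b_j be the coefficients of x^p in αᵢ and β_j; for i ∈ I₂ and j ∈ J₂ let cᵢ and d_j be the (nonzero) coefficients of x^{nᵢ} in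 αᵢ and of x^{o_j} in β_j. Set κ_λ = Σ_{i∈I₂} λᵢ nᵢ + p·Σ_{i∈I₁} λᵢ, κ_μ = Σ_{j∈J₂} μ_j o_j + p·Σ_{j∈J₁} μ_j, and N = p(#I₁ + #J₁) + Σ_{i∈I₂} nᵢ + Σ_{j∈J₂} o_j − p − 1. Then N ≥ 0, x^N divides J(x, x^p y) in ℂ[[x]][y], and the quotient H(x,y) = J(x, x^p y)/x^N satisfies H(0,y) = ∏_{i∈I₂}(−cᵢ) · ∏_{j∈J₂}(−d_j) · [ κ_λ · Σ_{j∈J₁} μ_j ∏_{i∈I₁}(y − aᵢ) ∏_{k∈J₁, k≠j}(y − b_k) − κ_μ · Σ_{i∈I₁} λᵢ ∏_{i'∈I₁, i'≠i}(y − a_{i'}) ∏_{k∈J₁}(y − b_k) ]. (This is the computation of the strict transform of the jacobian of two logarithmic foliations at an arbitrary bifurcation divisor of valuation p, in coordinates adapted to the divisor; κ_λ and κ_μ are the residues of the logarithmic foliations along the divisor.) -/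
open scoped Classical

open PowerSeries Polynomial Finset
noncomputable section

abbrev tt (p : ℕ) : Polynomial (PowerSeries ℂ) :=
  Polynomial.C ((PowerSeries.X : PowerSeries ℂ) ^ p) * Polynomial.X

lemma der_fact (m : ℕ) (hm : 1 ≤ m) (u : PowerSeries ℂ) :
    (((PowerSeries.X : PowerSeries ℂ) ^ m * u)).derivativeFun
      = PowerSeries.X ^ (m - 1) *
        (PowerSeries.C (m : ℂ) * u + PowerSeries.X * u.derivativeFun) := by
  have hXm : (PowerSeries.X : PowerSeries ℂ) ^ m = PowerSeries.X ^ (m-1) * PowerSeries.X := by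
    rw [← pow_succ, Nat.sub_add_cancel hm]
  have hD : (d⁄dX ℂ) ((PowerSeries.X : PowerSeries ℂ) ^ m * u)
      = PowerSeries.X ^ m * (d⁄dX ℂ) u + u * (m • (PowerSeries.X:PowerSeries ℂ) ^ (m-1)) := by
    rw [Derivation.leibniz, Derivation.leibniz_pow]
    simp [smul_eq_mul]
  have h2 : (d⁄dX ℂ) ((PowerSeries.X : PowerSeries ℂ) ^ m * u) = ((PowerSeries.X : PowerSeries ℂ) ^ m * u).derivativeFun := rfl
  have hcast : (m • (PowerSeries.X:PowerSeries ℂ) ^ (m-1)) = PowerSeries.C (m:ℂ) * PowerSeries.X ^ (m-1) := by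
    simp [nsmul_eq_mul]
  rw [← h2, hD, hXm, hcast]
  have h3 : (d⁄dX ℂ) u = u.derivativeFun := rfl
  rw [h3]; ring

lemma comp_lin (p m : ℕ) (hmp : m ≤ p) (γ u : PowerSeries ℂ)
    (hu : γ = PowerSeries.X ^ m * u) :
    (Polynomial.X - Polynomial.C γ).comp (tt p)
      = Polynomial.C ((PowerSeries.X : PowerSeries ℂ) ^ m) *
        (Polynomial.C ((PowerSeries.X : PowerSeries ℂ) ^ (p - m)) * Polynomial.X
          - Polynomial.C u) := by
  have hpm : (PowerSeries.X : PowerSeries ℂ) ^ m * PowerSeries.X ^ (p - m) = PowerSeries.X ^ p := by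
    rw [← pow_add]; congr 1; omega
  simp only [Polynomial.sub_comp, Polynomial.X_comp, Polynomial.C_comp, hu]
  rw [mul_sub, ← Polynomial.C_mul, ← mul_assoc, ← Polynomial.C_mul, hpm]

lemma side (r p : ℕ) (hp : 1 ≤ p) (lam : Fin r → ℂ) (α : Fin r → PowerSeries ℂ)
    (I1 : Finset (Fin r)) (n : Fin r → ℕ)
    (hI1 : ∀ i ∈ I1, (p : ℕ∞) ≤ (α i).order)
    (hI2 : ∀ i ∉ I1, 1 ≤ n i ∧ n i < p ∧ (α i).order = (n i : ℕ∞))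
    (a c : Fin r → ℂ) (ha : ∀ i, a i = PowerSeries.coeff p (α i))
    (hc : ∀ i, c i = PowerSeries.coeff (n i) (α i)) :
    ∃ Ah Bh : Polynomial (PowerSeries ℂ),
      ((-∑ i, Polynomial.C (PowerSeries.C (lam i) * (α i).derivativeFun) *
          ∏ j ∈ Finset.univ.erase i, (Polynomial.X - Polynomial.C (α j))).comp (tt p)
        = Polynomial.C ((PowerSeries.X:PowerSeries ℂ) ^ ((p * I1.card + ∑ i ∈ I1ᶜ, n i) - 1)) * Ah)
    ∧ (Polynomial.C ((PowerSeries.X:PowerSeries ℂ)^p) *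
        ((∑ i, Polynomial.C (PowerSeries.C (lam i)) *
          ∏ j ∈ Finset.univ.erase i, (Polynomial.X - Polynomial.C (α j))).comp (tt p))
        = Polynomial.C ((PowerSeries.X:PowerSeries ℂ) ^ (p * I1.card + ∑ i ∈ I1ᶜ, n i)) * Bh)
    ∧ (Ah.map (PowerSeries.constantCoeff)
        = Polynomial.C (∏ i ∈ I1ᶜ, (-(c i))) *
          (Polynomial.C (∑ i ∈ I1ᶜ, lam i * (n i:ℂ)) *
              ∏ i ∈ I1, (Polynomial.X - Polynomial.C (a i))
           - Polynomial.C (p:ℂ) * ∑ i ∈ I1, Polynomial.C (lam i * a i) *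
              ∏ j ∈ I1.erase i, (Polynomial.X - Polynomial.C (a j))))
    ∧ (Bh.map (PowerSeries.constantCoeff)
        = Polynomial.C (∏ i ∈ I1ᶜ, (-(c i))) *
          ∑ i ∈ I1, Polynomial.C (lam i) *
            ∏ j ∈ I1.erase i, (Polynomial.X - Polynomial.C (a j))) := by
  classical
  set M : ℕ := p * I1.card + ∑ i ∈ I1ᶜ, n i with hMdef
  set m : Fin r → ℕ := fun i => if i ∈ I1 then p else n i with hmdef
  have hm1 : ∀ i, 1 ≤ m i := by
    intro i; by_cases h : i ∈ I1 <;> simp [hmdef, h]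
    · omega
    · exact (hI2 i h).1
  have hmp : ∀ i, m i ≤ p := by
    intro i; by_cases h : i ∈ I1 <;> simp [hmdef, h]
    exact le_of_lt (hI2 i h).2.1
  have hmI : ∀ i ∈ I1, m i = p := fun i hi => by simp [hmdef, hi]
  have hmI' : ∀ i ∈ I1ᶜ, m i = n i := fun i hi => by
    simp only [Finset.mem_compl] at hi; simp [hmdef, hi]
  have hMsum : ∑ i, m i = M := by
    rw [← Finset.sum_add_sum_compl I1 m, Finset.sum_congr rfl hmI,
      Finset.sum_congr rfl hmI', Finset.sum_const, smul_eq_mul, mul_comm]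
  have hdvd : ∀ i, (PowerSeries.X : PowerSeries ℂ) ^ (m i) ∣ α i := by
    intro i
    rw [PowerSeries.X_pow_dvd_iff]
    intro k hk
    apply PowerSeries.coeff_of_lt_order
    by_cases h : i ∈ I1
    · refine lt_of_lt_of_le ?_ (hI1 i h)
      exact_mod_cast (by simpa [hmdef, h] using hk : k < p)
    · rw [(hI2 i h).2.2]
      exact_mod_cast (by simpa [hmdef, h] using hk : k < n i)
  choose u hu using hdvd
  have hv : ∀ i, PowerSeries.constantCoeff (u i) = if i ∈ I1 then a i else c i := by
    intro i
    have h2 : PowerSeries.coeff (m i) (α i) = PowerSeries.constantCoeff (u i) := by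
      rw [hu i]
      simpa using PowerSeries.coeff_X_pow_mul (u i) (m i) 0
    by_cases hmem : i ∈ I1
    · rw [if_pos hmem, ha i, ← hmI i hmem, h2]
    · rw [if_neg hmem, hc i, ← hmI' i (Finset.mem_compl.mpr hmem), h2]
  set h : Fin r → PowerSeries ℂ :=
    fun i => PowerSeries.C (m i : ℂ) * u i + PowerSeries.X * (u i).derivativeFun with hhdef
  have hder : ∀ i, (α i).derivativeFun = PowerSeries.X ^ (m i - 1) * h i := fun i => by
    rw [hu i]; exact der_fact (m i) (hm1 i) (u i)
  have hh0 : ∀ i, PowerSeries.constantCoeff (h i)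
      = (m i : ℂ) * (if i ∈ I1 then a i else c i) := by
    intro i
    simp [hhdef, map_add, map_mul, hv i]
  set g : Fin r → Polynomial (PowerSeries ℂ) := fun i =>
    Polynomial.C ((PowerSeries.X:PowerSeries ℂ) ^ (p - m i)) * Polynomial.X
      - Polynomial.C (u i) with hgdef
  have hgcomp : ∀ i, (Polynomial.X - Polynomial.C (α i)).comp (tt p)
      = Polynomial.C ((PowerSeries.X:PowerSeries ℂ) ^ (m i)) * g i :=
    fun i => comp_lin p (m i) (hmp i) _ _ (hu i)
  have hprodcomp : ∀ i : Fin r,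
      (∏ j ∈ Finset.univ.erase i, (Polynomial.X - Polynomial.C (α j))).comp (tt p)
      = Polynomial.C ((PowerSeries.X:PowerSeries ℂ) ^ (∑ j ∈ Finset.univ.erase i, m j)) *
          ∏ j ∈ Finset.univ.erase i, g j := by
    intro i
    rw [Polynomial.prod_comp, Finset.prod_congr rfl (fun j _ => hgcomp j),
      Finset.prod_mul_distrib, ← map_prod (Polynomial.C : PowerSeries ℂ →+* _),
      Finset.prod_pow_eq_pow_sum]
  have hsumerase : ∀ i : Fin r, m i + ∑ j ∈ Finset.univ.erase i, m j = M := by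
    intro i
    rw [Finset.add_sum_erase _ m (Finset.mem_univ i), hMsum]
  set ghat : Fin r → Polynomial ℂ := fun j =>
    if j ∈ I1 then Polynomial.X - Polynomial.C (a j) else -Polynomial.C (c j) with hghdef
  have hgh1 : ∀ j ∈ I1, ghat j = Polynomial.X - Polynomial.C (a j) := fun j hj => by
    simp [hghdef, hj]
  have hgh2 : ∀ j, j ∉ I1 → ghat j = -Polynomial.C (c j) := fun j hj => by
    simp [hghdef, hj]
  have hgmap : ∀ j, (g j).map (PowerSeries.constantCoeff) = ghat j := by
    intro j
    by_cases hj : j ∈ I1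
    · have h0 : p - m j = 0 := by have := hmI j hj; omega
      simp [hgdef, hghdef, h0, hv j, hj]
    · have h0 : p - m j ≠ 0 := by
        have h1 := hmI' j (Finset.mem_compl.mpr hj)
        have h2 := (hI2 j hj).2.1
        omega
      simp [hgdef, hghdef, map_pow, PowerSeries.constantCoeff_X, zero_pow h0, hv j, hj]
  have hprodc : ∀ S : Finset (Fin r), (∀ j ∈ S, j ∉ I1) →
      ∏ j ∈ S, ghat j = Polynomial.C (∏ j ∈ S, (-(c j))) := by
    intro S hS
    rw [Finset.prod_congr rfl (fun j hj => hgh2 j (hS j hj)),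
      Finset.prod_congr rfl (fun (j : Fin r) _ =>
        (Polynomial.C_neg (a := c j)).symm),
      ← map_prod (Polynomial.C : ℂ →+* Polynomial ℂ)]
  have hE1 : ∀ i ∈ I1, ∏ j ∈ Finset.univ.erase i, ghat j
      = (∏ j ∈ I1.erase i, (Polynomial.X - Polynomial.C (a j))) *
        Polynomial.C (∏ j ∈ I1ᶜ, (-(c j))) := by
    intro i hi
    have hset : Finset.univ.erase i = (I1.erase i) ∪ I1ᶜ := by
      ext x
      simp only [Finset.mem_erase, Finset.mem_union, Finset.mem_compl, Finset.mem_univ,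
        and_true]
      constructor
      · intro hx
        by_cases hxI : x ∈ I1
        · exact Or.inl ⟨hx, hxI⟩
        · exact Or.inr hxI
      · rintro (⟨hx, _⟩ | hx)
        · exact hx
        · rintro rfl; exact hx hi
    have hdisj : Disjoint (I1.erase i) I1ᶜ :=
      Disjoint.mono_left (Finset.erase_subset _ _) (disjoint_compl_right)
    rw [hset, Finset.prod_union hdisj,
      Finset.prod_congr rfl (fun j hj => hgh1 j (Finset.mem_of_mem_erase hj)),
      hprodc I1ᶜ (fun j hj => Finset.mem_compl.mp hj)]
  have hE2 : ∀ i, i ∉ I1 → ∏ j ∈ Finset.univ.erase i, ghat j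
      = (∏ j ∈ I1, (Polynomial.X - Polynomial.C (a j))) *
        Polynomial.C (∏ j ∈ I1ᶜ.erase i, (-(c j))) := by
    intro i hi
    have hset : Finset.univ.erase i = I1 ∪ (I1ᶜ.erase i) := by
      ext x
      simp only [Finset.mem_erase, Finset.mem_union, Finset.mem_compl, Finset.mem_univ,
        and_true]
      constructor
      · intro hx
        by_cases hxI : x ∈ I1
        · exact Or.inl hxI
        · exact Or.inr ⟨hx, hxI⟩
      · rintro (hx | ⟨hx, _⟩)
        · rintro rfl; exact hi hx
        · exact hx
    have hdisj : Disjoint I1 (I1ᶜ.erase i) :=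
      Disjoint.mono_right (Finset.erase_subset _ _) (disjoint_compl_right)
    rw [hset, Finset.prod_union hdisj,
      Finset.prod_congr rfl (fun j hj => hgh1 j hj),
      hprodc (I1ᶜ.erase i) (fun j hj => Finset.mem_compl.mp (Finset.mem_of_mem_erase hj))]
  refine ⟨-∑ i, Polynomial.C (PowerSeries.C (lam i) * h i) * ∏ j ∈ Finset.univ.erase i, g j,
    ∑ i, Polynomial.C (PowerSeries.C (lam i) * (PowerSeries.X:PowerSeries ℂ) ^ (p - m i)) *
      ∏ j ∈ Finset.univ.erase i, g j, ?_, ?_, ?_, ?_⟩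
  · -- A part
    have hAterm : ∀ i ∈ (Finset.univ : Finset (Fin r)),
        (Polynomial.C (PowerSeries.C (lam i) * (α i).derivativeFun) *
          ∏ j ∈ Finset.univ.erase i, (Polynomial.X - Polynomial.C (α j))).comp (tt p)
        = Polynomial.C ((PowerSeries.X:PowerSeries ℂ)^(M-1)) *
          (Polynomial.C (PowerSeries.C (lam i) * h i) * ∏ j ∈ Finset.univ.erase i, g j) := by
      intro i _
      have hexp : (m i - 1) + ∑ j ∈ Finset.univ.erase i, m j = M - 1 := by
        have h1 := hm1 i; have h2 := hsumerase i; omega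
      rw [Polynomial.mul_comp, Polynomial.C_comp, hprodcomp i, hder i, ← hexp, pow_add]
      simp only [Polynomial.C_mul]
      ring
    rw [Polynomial.neg_comp, Polynomial.sum_comp, Finset.sum_congr rfl hAterm,
      ← Finset.mul_sum, ← mul_neg]
  · -- B part
    have hBterm : ∀ i ∈ (Finset.univ : Finset (Fin r)),
        Polynomial.C ((PowerSeries.X:PowerSeries ℂ)^p) *
          ((Polynomial.C (PowerSeries.C (lam i)) *
            ∏ j ∈ Finset.univ.erase i, (Polynomial.X - Polynomial.C (α j))).comp (tt p))
        = Polynomial.C ((PowerSeries.X:PowerSeries ℂ)^M) *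
          (Polynomial.C (PowerSeries.C (lam i) * (PowerSeries.X:PowerSeries ℂ) ^ (p - m i)) *
            ∏ j ∈ Finset.univ.erase i, g j) := by
      intro i _
      have hexp : p + ∑ j ∈ Finset.univ.erase i, m j = M + (p - m i) := by
        have h1 := hmp i; have h2 := hsumerase i; omega
      rw [Polynomial.mul_comp, Polynomial.C_comp, hprodcomp i]
      have hXX : Polynomial.C ((PowerSeries.X:PowerSeries ℂ)^p) *
            Polynomial.C ((PowerSeries.X:PowerSeries ℂ) ^ (∑ j ∈ Finset.univ.erase i, m j))
          = Polynomial.C ((PowerSeries.X:PowerSeries ℂ)^M) *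
            Polynomial.C ((PowerSeries.X:PowerSeries ℂ) ^ (p - m i)) := by
        rw [← Polynomial.C_mul, ← Polynomial.C_mul, ← pow_add, ← pow_add, hexp]
      simp only [Polynomial.C_mul]
      linear_combination (∏ j ∈ Finset.univ.erase i, g j) *
        Polynomial.C ((PowerSeries.C) (lam i)) * hXX
    rw [Polynomial.sum_comp, Finset.mul_sum, Finset.sum_congr rfl hBterm, ← Finset.mul_sum]
  · -- Ah map
    have hmapterm : ∀ i : Fin r,
        (Polynomial.C (PowerSeries.C (lam i) * h i) *
          ∏ j ∈ Finset.univ.erase i, g j).map (PowerSeries.constantCoeff)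
        = Polynomial.C (lam i * PowerSeries.constantCoeff (h i)) *
            ∏ j ∈ Finset.univ.erase i, ghat j := by
      intro i
      rw [Polynomial.map_mul, Polynomial.map_C, map_mul, PowerSeries.constantCoeff_C,
        ← Polynomial.coe_mapRingHom, map_prod]
      congr 1
      exact Finset.prod_congr rfl fun j _ => by
        rw [Polynomial.coe_mapRingHom]; exact hgmap j
    rw [← Polynomial.coe_mapRingHom, map_neg, map_sum]
    simp only [Polynomial.coe_mapRingHom]
    rw [Finset.sum_congr rfl (fun i _ => hmapterm i),
      ← Finset.sum_add_sum_compl I1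
        (fun i => Polynomial.C (lam i * PowerSeries.constantCoeff (h i)) *
          ∏ j ∈ Finset.univ.erase i, ghat j)]
    have hS1 : ∑ i ∈ I1, Polynomial.C (lam i * PowerSeries.constantCoeff (h i)) *
          ∏ j ∈ Finset.univ.erase i, ghat j
        = Polynomial.C (∏ j ∈ I1ᶜ, (-(c j))) * (Polynomial.C (p:ℂ) *
            ∑ i ∈ I1, Polynomial.C (lam i * a i) *
              ∏ j ∈ I1.erase i, (Polynomial.X - Polynomial.C (a j))) := by
      have hterm : ∀ i ∈ I1,
          Polynomial.C (lam i * PowerSeries.constantCoeff (h i)) *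
            ∏ j ∈ Finset.univ.erase i, ghat j
          = Polynomial.C (∏ j ∈ I1ᶜ, (-(c j))) * (Polynomial.C (p:ℂ) *
              (Polynomial.C (lam i * a i) *
                ∏ j ∈ I1.erase i, (Polynomial.X - Polynomial.C (a j)))) := by
        intro i hi
        rw [hh0 i, if_pos hi, hmI i hi, hE1 i hi]
        simp only [Polynomial.C_mul]
        ring
      rw [Finset.sum_congr rfl hterm, ← Finset.mul_sum, ← Finset.mul_sum]
    have hS2 : ∑ i ∈ I1ᶜ, Polynomial.C (lam i * PowerSeries.constantCoeff (h i)) *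
          ∏ j ∈ Finset.univ.erase i, ghat j
        = -(Polynomial.C (∏ j ∈ I1ᶜ, (-(c j))) *
            (Polynomial.C (∑ i ∈ I1ᶜ, lam i * (n i : ℂ)) *
              ∏ i ∈ I1, (Polynomial.X - Polynomial.C (a i)))) := by
      have hterm : ∀ i ∈ I1ᶜ,
          Polynomial.C (lam i * PowerSeries.constantCoeff (h i)) *
            ∏ j ∈ Finset.univ.erase i, ghat j
          = -(Polynomial.C (∏ j ∈ I1ᶜ, (-(c j))) *
              (Polynomial.C (lam i * (n i : ℂ)) *
                ∏ i ∈ I1, (Polynomial.X - Polynomial.C (a i)))) := by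
        intro i hi
        have hi' := Finset.mem_compl.mp hi
        rw [hh0 i, if_neg hi', hmI' i hi, hE2 i hi']
        have hcK : Polynomial.C (c i) * Polynomial.C (∏ j ∈ I1ᶜ.erase i, (-(c j)))
            = -Polynomial.C (∏ j ∈ I1ᶜ, (-(c j))) := by
          rw [← Polynomial.C_mul, ← Polynomial.C_neg]
          congr 1
          have h3 := Finset.mul_prod_erase I1ᶜ (fun j => -(c j)) hi
          linear_combination -h3
        simp only [Polynomial.C_mul]
        linear_combination (Polynomial.C (lam i) * Polynomial.C ((n i : ℂ)) *
          ∏ i ∈ I1, (Polynomial.X - Polynomial.C (a i))) * hcK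
      rw [Finset.sum_congr rfl hterm, Finset.sum_neg_distrib, ← Finset.mul_sum,
        ← Finset.sum_mul, ← map_sum]
    rw [hS1, hS2]
    ring
  · -- Bh map
    have hmapterm : ∀ i : Fin r,
        (Polynomial.C (PowerSeries.C (lam i) * (PowerSeries.X:PowerSeries ℂ) ^ (p - m i)) *
          ∏ j ∈ Finset.univ.erase i, g j).map (PowerSeries.constantCoeff)
        = Polynomial.C (lam i *
            PowerSeries.constantCoeff ((PowerSeries.X:PowerSeries ℂ) ^ (p - m i))) *
            ∏ j ∈ Finset.univ.erase i, ghat j := by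
      intro i
      rw [Polynomial.map_mul, Polynomial.map_C, map_mul, PowerSeries.constantCoeff_C,
        ← Polynomial.coe_mapRingHom, map_prod]
      congr 1
      exact Finset.prod_congr rfl fun j _ => by
        rw [Polynomial.coe_mapRingHom]; exact hgmap j
    rw [← Polynomial.coe_mapRingHom, map_sum]
    simp only [Polynomial.coe_mapRingHom]
    rw [Finset.sum_congr rfl (fun i _ => hmapterm i)]
    have hterm : ∀ i ∈ (Finset.univ : Finset (Fin r)),
        Polynomial.C (lam i *
            PowerSeries.constantCoeff ((PowerSeries.X:PowerSeries ℂ) ^ (p - m i))) *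
          ∏ j ∈ Finset.univ.erase i, ghat j
        = if i ∈ I1 then Polynomial.C (∏ j ∈ I1ᶜ, (-(c j))) * (Polynomial.C (lam i) *
            ∏ j ∈ I1.erase i, (Polynomial.X - Polynomial.C (a j))) else 0 := by
      intro i _
      by_cases hi : i ∈ I1
      · have h0 : p - m i = 0 := by have := hmI i hi; omega
        rw [if_pos hi, h0, pow_zero, map_one, mul_one, hE1 i hi]
        ring
      · have h0 : p - m i ≠ 0 := by
          have h1 := hmI' i (Finset.mem_compl.mpr hi)
          have h2 := (hI2 i hi).2.1
          omega
        rw [if_neg hi, map_pow, PowerSeries.constantCoeff_X, zero_pow h0, mul_zero,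
          Polynomial.C_0, zero_mul]
    rw [Finset.sum_congr rfl hterm, Finset.sum_ite_mem, Finset.univ_inter, ← Finset.mul_sum]


/-- Strict transform of the jacobian of two logarithmic foliations
at an arbitrary bifurcation divisor of valuation `p`, in adapted coordinates.
With `I₁ = {i : ord αᵢ ≥ p}`, `I₂ = I₁ᶜ` (where `ord αᵢ = nᵢ < p`), `J₁, J₂`
analogous for the `β_j`, and `I₁ ∪ J₁ ≠ ∅`, setting
`κ_λ = Σ_{I₂} λᵢnᵢ + pΣ_{I₁} λᵢ`, `κ_μ = Σ_{J₂} μ_jo_j + pΣ_{J₁} μ_j` and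
`N = p(#I₁+#J₁) + Σ_{I₂} nᵢ + Σ_{J₂} o_j − p − 1`, one has `N ≥ 0`,
`x^N ∣ J(x, x^p y)` and the quotient `H` satisfies
`H(0,y) = ∏_{I₂}(−cᵢ)∏_{J₂}(−d_j)·[κ_λ Σ_{j∈J₁} μ_j ∏_{I₁}(y−aᵢ)∏_{k∈J₁,k≠j}(y−b_k)
 − κ_μ Σ_{i∈I₁} λᵢ ∏_{i'∈I₁,i'≠i}(y−a_{i'})∏_{k∈J₁}(y−b_k)]`. -/
theorem jacobian_strict_transform_general_bifurcation
    (r s : ℕ) (hr : 1 ≤ r) (hs : 1 ≤ s) (p : ℕ) (hp : 1 ≤ p)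
    (lam : Fin r → ℂ) (mu : Fin s → ℂ)
    (α : Fin r → PowerSeries ℂ) (β : Fin s → PowerSeries ℂ)
    (I1 : Finset (Fin r)) (J1 : Finset (Fin s))
    (hne : I1.Nonempty ∨ J1.Nonempty)
    (n : Fin r → ℕ) (o : Fin s → ℕ)
    (hαI1 : ∀ i ∈ I1, (p : ℕ∞) ≤ (α i).order)
    (hαI2 : ∀ i ∉ I1, 1 ≤ n i ∧ n i < p ∧ (α i).order = (n i : ℕ∞))
    (hβJ1 : ∀ j ∈ J1, (p : ℕ∞) ≤ (β j).order)
    (hβJ2 : ∀ j ∉ J1, 1 ≤ o j ∧ o j < p ∧ (β j).order = (o j : ℕ∞))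
    (a : Fin r → ℂ) (ha : ∀ i, a i = PowerSeries.coeff p (α i))
    (b : Fin s → ℂ) (hb : ∀ j, b j = PowerSeries.coeff p (β j))
    (c : Fin r → ℂ) (hc : ∀ i, c i = PowerSeries.coeff (n i) (α i))
    (d : Fin s → ℂ) (hd : ∀ j, d j = PowerSeries.coeff (o j) (β j))
    (klam kmu : ℂ)
    (hklam : klam = ∑ i ∈ I1ᶜ, lam i * (n i : ℂ) + (p : ℂ) * ∑ i ∈ I1, lam i)
    (hkmu : kmu = ∑ j ∈ J1ᶜ, mu j * (o j : ℂ) + (p : ℂ) * ∑ j ∈ J1, mu j)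
    (N : ℤ)
    (hN : N = (p : ℤ) * (I1.card + J1.card) + ∑ i ∈ I1ᶜ, (n i : ℤ)
        + ∑ j ∈ J1ᶜ, (o j : ℤ) - p - 1)
    (A B P Q : Polynomial (PowerSeries ℂ))
    (hA : A = -∑ i, Polynomial.C (PowerSeries.C (lam i) * (α i).derivativeFun) *
        ∏ j ∈ Finset.univ.erase i, (Polynomial.X - Polynomial.C (α j)))
    (hB : B = ∑ i, Polynomial.C (PowerSeries.C (lam i)) *
        ∏ j ∈ Finset.univ.erase i, (Polynomial.X - Polynomial.C (α j)))
    (hP : P = -∑ j, Polynomial.C (PowerSeries.C (mu j) * (β j).derivativeFun) *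
        ∏ k ∈ Finset.univ.erase j, (Polynomial.X - Polynomial.C (β k)))
    (hQ : Q = ∑ j, Polynomial.C (PowerSeries.C (mu j)) *
        ∏ k ∈ Finset.univ.erase j, (Polynomial.X - Polynomial.C (β k)))
    (J : Polynomial (PowerSeries ℂ)) (hJ : J = A * Q - B * P) :
    0 ≤ N ∧
    ∃ H : Polynomial (PowerSeries ℂ),
      J.comp (Polynomial.C ((PowerSeries.X : PowerSeries ℂ) ^ p) * Polynomial.X) =
        Polynomial.C ((PowerSeries.X : PowerSeries ℂ) ^ N.toNat) * H ∧
      H.map (PowerSeries.constantCoeff) =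
        Polynomial.C ((∏ i ∈ I1ᶜ, (-(c i))) * ∏ j ∈ J1ᶜ, (-(d j))) *
          (Polynomial.C klam *
              ∑ j ∈ J1, Polynomial.C (mu j) *
                ((∏ i ∈ I1, (Polynomial.X - Polynomial.C (a i))) *
                  ∏ k ∈ J1.erase j, (Polynomial.X - Polynomial.C (b k)))
            - Polynomial.C kmu *
              ∑ i ∈ I1, Polynomial.C (lam i) *
                ((∏ i' ∈ I1.erase i, (Polynomial.X - Polynomial.C (a i'))) *
                  ∏ k ∈ J1, (Polynomial.X - Polynomial.C (b k)))) := by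
  classical
  obtain ⟨Ah, Bh, hAc, hBc, hAm, hBm⟩ :=
    side r p hp lam α I1 n hαI1 hαI2 a c ha hc
  obtain ⟨Ph, Qh, hPc, hQc, hPm, hQm⟩ :=
    side s p hp mu β J1 o hβJ1 hβJ2 b d hb hd
  set M : ℕ := p * I1.card + ∑ i ∈ I1ᶜ, n i with hMdef
  set M' : ℕ := p * J1.card + ∑ j ∈ J1ᶜ, o j with hM'def
  have hM1 : 1 ≤ M := by
    rcases I1.eq_empty_or_nonempty with hI | hI
    · have i0 : Fin r := ⟨0, hr⟩
      have hi0 : i0 ∈ I1ᶜ := by simp [hI]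
      have h1 : n i0 ≤ ∑ i ∈ I1ᶜ, n i :=
        Finset.single_le_sum (fun i _ => Nat.zero_le _) hi0
      have h2 := (hαI2 i0 (by simp [hI])).1
      omega
    · have h1 : 1 ≤ I1.card := Finset.card_pos.mpr hI
      have : p ≤ p * I1.card := Nat.le_mul_of_pos_right p h1
      omega
  have hM'1 : 1 ≤ M' := by
    rcases J1.eq_empty_or_nonempty with hI | hI
    · have j0 : Fin s := ⟨0, hs⟩
      have hj0 : j0 ∈ J1ᶜ := by simp [hI]
      have h1 : o j0 ≤ ∑ j ∈ J1ᶜ, o j :=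
        Finset.single_le_sum (fun j _ => Nat.zero_le _) hj0
      have h2 := (hβJ2 j0 (by simp [hI])).1
      omega
    · have h1 : 1 ≤ J1.card := Finset.card_pos.mpr hI
      have : p ≤ p * J1.card := Nat.le_mul_of_pos_right p h1
      omega
  have hpM : p + 1 ≤ M + M' := by
    rcases hne with hI | hI
    · have h1 : 1 ≤ I1.card := Finset.card_pos.mpr hI
      have : p ≤ p * I1.card := Nat.le_mul_of_pos_right p h1
      omega
    · have h1 : 1 ≤ J1.card := Finset.card_pos.mpr hI
      have : p ≤ p * J1.card := Nat.le_mul_of_pos_right p h1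
      omega
  have hMz : (M : ℤ) = (p : ℤ) * I1.card + ∑ i ∈ I1ᶜ, (n i : ℤ) := by
    rw [hMdef]; push_cast; ring
  have hM'z : (M' : ℤ) = (p : ℤ) * J1.card + ∑ j ∈ J1ᶜ, (o j : ℤ) := by
    rw [hM'def]; push_cast; ring
  have hNeq : N = (M : ℤ) + (M' : ℤ) - p - 1 := by
    rw [hN, hMz, hM'z]; ring
  have hN0 : 0 ≤ N := by omega
  have hNt : N.toNat + (p + 1) = M + M' := by omega
  refine ⟨hN0, Ah * Qh - Bh * Ph, ?_, ?_⟩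
  · -- divisibility part
    have hXne : (Polynomial.C ((PowerSeries.X : PowerSeries ℂ) ^ (p+1)) :
        Polynomial (PowerSeries ℂ)) ≠ 0 :=
      Polynomial.C_ne_zero.mpr (pow_ne_zero _ PowerSeries.X_ne_zero)
    apply mul_left_cancel₀ hXne
    have h1 : Polynomial.C (PowerSeries.X : PowerSeries ℂ) *
        (A.comp (tt p)) = Polynomial.C ((PowerSeries.X:PowerSeries ℂ)^M) * Ah := by
      rw [hA, hAc, ← mul_assoc, ← Polynomial.C_mul, ← pow_succ',
        Nat.sub_add_cancel hM1]
    have h3 : Polynomial.C (PowerSeries.X : PowerSeries ℂ) *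
        (P.comp (tt p)) = Polynomial.C ((PowerSeries.X:PowerSeries ℂ)^M') * Ph := by
      rw [hP, hPc, ← mul_assoc, ← Polynomial.C_mul, ← pow_succ',
        Nat.sub_add_cancel hM'1]
    have h4 : Polynomial.C ((PowerSeries.X:PowerSeries ℂ)^p) *
        (B.comp (tt p)) = Polynomial.C ((PowerSeries.X:PowerSeries ℂ)^M) * Bh := by
      rw [hB, hBc]
    have h2 : Polynomial.C ((PowerSeries.X:PowerSeries ℂ)^p) *
        (Q.comp (tt p)) = Polynomial.C ((PowerSeries.X:PowerSeries ℂ)^M') * Qh := by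
      rw [hQ, hQc]
    have hC1 : (Polynomial.C ((PowerSeries.X : PowerSeries ℂ) ^ (p+1)) :
        Polynomial (PowerSeries ℂ))
        = Polynomial.C (PowerSeries.X : PowerSeries ℂ) *
          Polynomial.C ((PowerSeries.X:PowerSeries ℂ)^p) := by
      rw [← Polynomial.C_mul, ← pow_succ']
    have hC2 : (Polynomial.C ((PowerSeries.X : PowerSeries ℂ) ^ (N.toNat + (p+1))) :
        Polynomial (PowerSeries ℂ))
        = Polynomial.C ((PowerSeries.X:PowerSeries ℂ)^M) *
          Polynomial.C ((PowerSeries.X:PowerSeries ℂ)^M') := by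
      rw [← Polynomial.C_mul, ← pow_add, hNt]
    have hJc : J.comp (tt p) = A.comp (tt p) * Q.comp (tt p) -
        B.comp (tt p) * P.comp (tt p) := by
      rw [hJ, Polynomial.sub_comp, Polynomial.mul_comp, Polynomial.mul_comp]
    show Polynomial.C ((PowerSeries.X : PowerSeries ℂ) ^ (p+1)) * (J.comp (tt p)) = _
    rw [hJc]
    have hgoal : Polynomial.C ((PowerSeries.X : PowerSeries ℂ) ^ (p+1)) *
        (Polynomial.C ((PowerSeries.X : PowerSeries ℂ) ^ N.toNat) * (Ah * Qh - Bh * Ph))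
        = Polynomial.C ((PowerSeries.X : PowerSeries ℂ) ^ (N.toNat + (p+1))) *
          (Ah * Qh - Bh * Ph) := by
      rw [← mul_assoc, ← Polynomial.C_mul, ← pow_add]
      ring_nf
    rw [hgoal, hC1, hC2]
    linear_combination (Polynomial.C ((PowerSeries.X:PowerSeries ℂ)^p) * (Q.comp (tt p))) * h1
      + (Polynomial.C ((PowerSeries.X:PowerSeries ℂ)^M) * Ah) * h2
      - (Polynomial.C (PowerSeries.X : PowerSeries ℂ) * (P.comp (tt p))) * h4
      - (Polynomial.C ((PowerSeries.X:PowerSeries ℂ)^M) * Bh) * h3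
  · -- map part
    rw [Polynomial.map_sub, Polynomial.map_mul, Polynomial.map_mul, hAm, hBm, hPm, hQm]
    set F : Polynomial ℂ := ∏ i ∈ I1, (Polynomial.X - Polynomial.C (a i)) with hF
    set G : Polynomial ℂ := ∏ j ∈ J1, (Polynomial.X - Polynomial.C (b j)) with hG
    set Tl : Polynomial ℂ := ∑ i ∈ I1, Polynomial.C (lam i) *
      ∏ j ∈ I1.erase i, (Polynomial.X - Polynomial.C (a j)) with hTl
    set Sl : Polynomial ℂ := ∑ i ∈ I1, Polynomial.C (lam i * a i) *
      ∏ j ∈ I1.erase i, (Polynomial.X - Polynomial.C (a j)) with hSl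
    set Tm : Polynomial ℂ := ∑ j ∈ J1, Polynomial.C (mu j) *
      ∏ k ∈ J1.erase j, (Polynomial.X - Polynomial.C (b k)) with hTm
    set Sm : Polynomial ℂ := ∑ j ∈ J1, Polynomial.C (mu j * b j) *
      ∏ k ∈ J1.erase j, (Polynomial.X - Polynomial.C (b k)) with hSm
    have hsum1 : ∑ j ∈ J1, Polynomial.C (mu j) *
        (F * ∏ k ∈ J1.erase j, (Polynomial.X - Polynomial.C (b k))) = F * Tm := by
      rw [hTm, Finset.mul_sum]
      exact Finset.sum_congr rfl fun j _ => by ring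
    have hsum2 : ∑ i ∈ I1, Polynomial.C (lam i) *
        ((∏ i' ∈ I1.erase i, (Polynomial.X - Polynomial.C (a i'))) * G) = Tl * G := by
      rw [hTl, Finset.sum_mul]
      exact Finset.sum_congr rfl fun i _ => by ring
    have hBl : Polynomial.C (∑ i ∈ I1, lam i) * F + Sl = Polynomial.X * Tl := by
      rw [map_sum, Finset.sum_mul, hSl, ← Finset.sum_add_distrib, hTl, Finset.mul_sum]
      refine Finset.sum_congr rfl fun i hi => ?_
      have hFi : F = (Polynomial.X - Polynomial.C (a i)) *
          ∏ j ∈ I1.erase i, (Polynomial.X - Polynomial.C (a j)) :=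
        (Finset.mul_prod_erase I1 _ hi).symm
      rw [Polynomial.C_mul]
      linear_combination (Polynomial.C (lam i)) * hFi
    have hBm2 : Polynomial.C (∑ j ∈ J1, mu j) * G + Sm = Polynomial.X * Tm := by
      rw [map_sum, Finset.sum_mul, hSm, ← Finset.sum_add_distrib, hTm, Finset.mul_sum]
      refine Finset.sum_congr rfl fun j hj => ?_
      have hGj : G = (Polynomial.X - Polynomial.C (b j)) *
          ∏ k ∈ J1.erase j, (Polynomial.X - Polynomial.C (b k)) :=
        (Finset.mul_prod_erase J1 _ hj).symm
      rw [Polynomial.C_mul]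
      linear_combination (Polynomial.C (mu j)) * hGj
    have hklamC : (Polynomial.C klam : Polynomial ℂ)
        = Polynomial.C (∑ i ∈ I1ᶜ, lam i * (n i : ℂ)) +
          Polynomial.C ((p:ℕ):ℂ) * Polynomial.C (∑ i ∈ I1, lam i) := by
      rw [hklam, map_add, map_mul]
    have hkmuC : (Polynomial.C kmu : Polynomial ℂ)
        = Polynomial.C (∑ j ∈ J1ᶜ, mu j * (o j : ℂ)) +
          Polynomial.C ((p:ℕ):ℂ) * Polynomial.C (∑ j ∈ J1, mu j) := by
      rw [hkmu, map_add, map_mul]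
    rw [hsum1, hsum2, map_mul]
    linear_combination
      (Polynomial.C (∏ i ∈ I1ᶜ, (-(c i))) * Polynomial.C (∏ j ∈ J1ᶜ, (-(d j)))) *
        ((-(F * Tm)) * hklamC + (Tl * G) * hkmuC
          - (Polynomial.C ((p:ℕ):ℂ) * Tm) * hBl
          + (Polynomial.C ((p:ℕ):ℂ) * Tl) * hBm2)
end
end

section
/- Let r ≥ 1, let α₁,…,α_r ∈ ℂ[[x]] with α₁ = 0 and, for i ≥ 2, αᵢ ≠ 0 with αᵢ(0) = 0, and let λ ∈ ℂ^r with λ₁ ≠ 0. Form the logarithmic 1-form ω_λ = A dx + B dy with A = −Σᵢ λᵢ αᵢ′ ∏_{j≠i}(y−α_j) and B = Σᵢ λᵢ ∏_{j≠i}(y−α_j). Then y divides A, say A = y·a; B(x,0) = λ₁ ∏_{j=2}^r(−α_j) ≠ 0; and the residue at x = 0 of a(x,0)/B(x,0), i.e., the coefficient of x^{−1} in the Laurent series expansion of a(x,0)/B(x,0) in ℂ((x)), equals (1/λ₁)·Σ_{i=2}^r λᵢ·ord(αᵢ). Consequently, the Camacho–Sad index of the logarithmic foliation along the separatrix y = 0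 at the origin is I₀ = −(1/λ₁)·Σ_{i=2}^r λᵢ·ord(αᵢ). -/
open PowerSeries

lemma coe_LS_ne_zero {γ : PowerSeries ℂ} (h : γ ≠ 0) : (γ : LaurentSeries ℂ) ≠ 0 := by
  intro hc
  exact h (HahnSeries.ofPowerSeries_injective (by rw [hc, map_zero]))

lemma res_logderiv (γ : PowerSeries ℂ) (hne : γ ≠ 0) (hc : constantCoeff γ = 0) (n : ℕ)
    (hord : γ.order = (n : ℕ∞)) :
    (((γ.derivativeFun : PowerSeries ℂ) : LaurentSeries ℂ) / (γ : LaurentSeries ℂ)).coeff (-1)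
      = (n : ℂ) := by
  obtain ⟨hcn, hlow⟩ := PowerSeries.order_eq_nat.1 hord
  obtain ⟨m, rfl⟩ : ∃ m, n = m + 1 := by
    cases n with
    | zero => exact absurd (by simpa using hc) hcn
    | succ m => exact ⟨m, rfl⟩
  obtain ⟨u, hγ⟩ : X ^ (m + 1) ∣ γ := PowerSeries.X_pow_dvd_iff.2 hlow
  have hu0 : constantCoeff u ≠ 0 := by
    have h2 : (PowerSeries.coeff (0 + (m+1))) γ = PowerSeries.coeff 0 u := by
      rw [hγ]; exact PowerSeries.coeff_X_pow_mul u (m+1) 0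
    intro h
    apply hcn
    rw [show m + 1 = 0 + (m+1) by omega, h2, PowerSeries.coeff_zero_eq_constantCoeff, h]
  have hXpow : (X ^ (m + 1) : PowerSeries ℂ).derivativeFun
      = PowerSeries.C (m + 1 : ℂ) * X ^ m := by
    have h3 : ((Polynomial.X ^ (m+1) : Polynomial ℂ) : PowerSeries ℂ) = X ^ (m+1) := by simp
    rw [← h3]; change (d⁄dX ℂ) _ = _; rw [PowerSeries.derivativeFun_coe, Polynomial.derivative_X_pow]
    push_cast
    simp
  have hder : γ.derivativeFun
      = PowerSeries.C (m + 1 : ℂ) * X ^ m * u + X ^ (m + 1) * u.derivativeFun := by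
    rw [hγ, PowerSeries.derivativeFun_mul, hXpow]
    simp only [smul_eq_mul]
    ring
  have huinv : u⁻¹ * u = 1 := by rw [mul_comm]; exact PowerSeries.mul_inv_cancel u hu0
  have hdiv : ((γ.derivativeFun : PowerSeries ℂ) : LaurentSeries ℂ) / (γ : LaurentSeries ℂ)
      = HahnSeries.single (-1 : ℤ) ((m : ℂ) + 1)
        + ((u.derivativeFun * u⁻¹ : PowerSeries ℂ) : LaurentSeries ℂ) := by
    rw [div_eq_iff (coe_LS_ne_zero hne)]
    rw [hder, hγ, add_mul]
    simp only [PowerSeries.coe_mul, PowerSeries.coe_add, PowerSeries.coe_pow, PowerSeries.coe_C]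
    congr 1
    · have h1 : (HahnSeries.single (-1 : ℤ) ((m : ℂ) + 1))
          * (HahnSeries.ofPowerSeries ℤ ℂ X) ^ (m+1)
          = HahnSeries.C ((m:ℂ)+1) * (HahnSeries.ofPowerSeries ℤ ℂ X) ^ m := by
        rw [HahnSeries.ofPowerSeries_X, HahnSeries.single_pow, HahnSeries.single_pow,
          HahnSeries.single_mul_single, HahnSeries.C_apply, HahnSeries.single_mul_single]
        congr 1 <;> simp
      calc HahnSeries.C ((m:ℂ)+1) * (HahnSeries.ofPowerSeries ℤ ℂ X)^m
              * (HahnSeries.ofPowerSeries ℤ ℂ u)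
          = (HahnSeries.single (-1 : ℤ) ((m : ℂ) + 1)
            * (HahnSeries.ofPowerSeries ℤ ℂ X) ^ (m+1)) * (HahnSeries.ofPowerSeries ℤ ℂ u) := by
            rw [h1]
        _ = _ := by ring
    · simp only [← map_pow]; simp only [← map_mul]
      refine congrArg (HahnSeries.ofPowerSeries ℤ ℂ) ?_
      calc X ^ (m+1) * u.derivativeFun
          = X ^ (m+1) * u.derivativeFun * (u⁻¹ * u) := by rw [huinv, mul_one]
        _ = u.derivativeFun * u⁻¹ * (X ^ (m+1) * u) := by ring
  rw [hdiv, HahnSeries.coeff_add, HahnSeries.coeff_single_same, PowerSeries.coeff_coe]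
  norm_num


/-- Camacho–Sad index of a logarithmic foliation along the
separatrix `y = 0`. Here `ℂ[[x,y]]` is represented as `ℂ⟦x⟧[y]`, `α 0 = 0`
(indices are `0`-based, so `α 0`, `lam 0` are the paper's `α₁`, `λ₁`),
`ν i = ord (α i)` for `i ≠ 0`, and the residue is the coefficient of `x⁻¹` of the
quotient in the Laurent series field `ℂ((x))`. The conclusions: `y ∣ A` with
`A = y·a`; `B(x,0) = λ₁ ∏_{j≥2} (−α_j) ≠ 0`; and
`Res₀(a(x,0)/B(x,0)) = (1/λ₁)·Σ_{i≥2} λᵢ·ord(αᵢ)`, so that the Camacho–Sad index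
is `I₀ = −(1/λ₁)·Σ_{i≥2} λᵢ·ord(αᵢ)`. -/
theorem camachoSad_index_logarithmic
    (r : ℕ) (hr : 1 ≤ r)
    (α : Fin r → PowerSeries ℂ) (lam : Fin r → ℂ)
    (h0 : α ⟨0, hr⟩ = 0)
    (hαne : ∀ i : Fin r, i ≠ ⟨0, hr⟩ → α i ≠ 0)
    (hαconst : ∀ i, PowerSeries.constantCoeff (α i) = 0)
    (hlam : lam ⟨0, hr⟩ ≠ 0)
    (ν : Fin r → ℕ) (hν : ∀ i : Fin r, i ≠ ⟨0, hr⟩ → (α i).order = (ν i : ℕ∞))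
    (A B : Polynomial (PowerSeries ℂ))
    (hA : A = -∑ i, Polynomial.C (PowerSeries.C (lam i) * (α i).derivativeFun) *
        ∏ j ∈ Finset.univ.erase i, (Polynomial.X - Polynomial.C (α j)))
    (hB : B = ∑ i, Polynomial.C (PowerSeries.C (lam i)) *
        ∏ j ∈ Finset.univ.erase i, (Polynomial.X - Polynomial.C (α j))) :
    ∃ a : Polynomial (PowerSeries ℂ),
      A = Polynomial.X * a ∧
      B.coeff 0 =
        PowerSeries.C (lam ⟨0, hr⟩) * ∏ j ∈ Finset.univ.erase ⟨0, hr⟩, (-(α j)) ∧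
      B.coeff 0 ≠ 0 ∧
      (((a.coeff 0 : PowerSeries ℂ) : LaurentSeries ℂ) /
          ((B.coeff 0 : PowerSeries ℂ) : LaurentSeries ℂ)).coeff (-1) =
        (lam ⟨0, hr⟩)⁻¹ * ∑ i ∈ Finset.univ.erase ⟨0, hr⟩, lam i * (ν i : ℂ) := by
  classical
  set z : Fin r := ⟨0, hr⟩ with hz
  set S : Finset (Fin r) := Finset.univ.erase z with hS
  have hd0 : (0 : PowerSeries ℂ).derivativeFun = 0 := by
    exact (PowerSeries.derivative ℂ).map_zero
  have hcz : ∀ p : Polynomial (PowerSeries ℂ), p.coeff 0 = Polynomial.eval 0 p := by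
    intro p; rw [Polynomial.coeff_zero_eq_eval_zero]
  -- value of B.coeff 0
  have hBc : B.coeff 0 = PowerSeries.C (lam z) * ∏ j ∈ S, (-(α j)) := by
    rw [hB, hcz, Polynomial.eval_finset_sum,
      ← Finset.add_sum_erase _ _ (Finset.mem_univ z)]
    have hzero : ∀ i ∈ S, Polynomial.eval 0 (Polynomial.C (PowerSeries.C (lam i)) *
        ∏ j ∈ Finset.univ.erase i, (Polynomial.X - Polynomial.C (α j))) = 0 := by
      intro i hi
      have hiz : i ≠ z := (Finset.mem_erase.1 hi).1
      have hzmem : z ∈ Finset.univ.erase i := Finset.mem_erase.2 ⟨Ne.symm hiz, Finset.mem_univ z⟩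
      rw [Polynomial.eval_mul, Polynomial.eval_prod]
      rw [Finset.prod_eq_zero hzmem (by simp [h0]), mul_zero]
    rw [Finset.sum_eq_zero hzero, add_zero, Polynomial.eval_mul, Polynomial.eval_C,
      Polynomial.eval_prod]
    refine congrArg _ (Finset.prod_congr rfl fun j _ => ?_)
    simp
  have hCne : PowerSeries.C (lam z) ≠ 0 := fun h =>
    hlam (by simpa using congrArg (PowerSeries.constantCoeff) h)
  have hBne : B.coeff 0 ≠ 0 := by
    rw [hBc]
    exact mul_ne_zero hCne (Finset.prod_ne_zero_iff.2 fun j hj =>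
      neg_ne_zero.2 (hαne j (Finset.mem_erase.1 hj).1))
  -- the cofactor a
  refine ⟨-∑ i ∈ S, Polynomial.C (PowerSeries.C (lam i) * (α i).derivativeFun) *
      ∏ j ∈ S.erase i, (Polynomial.X - Polynomial.C (α j)), ?_, hBc, hBne, ?_⟩
  · -- A = X * a
    rw [hA, ← Finset.add_sum_erase _ _ (Finset.mem_univ z)]
    rw [show α z = 0 from h0, hd0, mul_zero, map_zero, zero_mul, zero_add]
    rw [show (∑ i ∈ S, Polynomial.C (PowerSeries.C (lam i) * (α i).derivativeFun) *
        ∏ j ∈ Finset.univ.erase i, (Polynomial.X - Polynomial.C (α j)))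
      = ∑ i ∈ S, Polynomial.X *
          (Polynomial.C (PowerSeries.C (lam i) * (α i).derivativeFun) *
            ∏ j ∈ S.erase i, (Polynomial.X - Polynomial.C (α j))) from
      Finset.sum_congr rfl fun i hi => by
        have hiz : i ≠ z := (Finset.mem_erase.1 hi).1
        have hzmem : z ∈ Finset.univ.erase i := Finset.mem_erase.2 ⟨Ne.symm hiz, Finset.mem_univ z⟩
        rw [← Finset.mul_prod_erase _ _ hzmem, h0, map_zero, sub_zero,
          Finset.erase_right_comm]
        ring]
    rw [← Finset.mul_sum]
    ring
  · -- the residue computation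
    have hac : (-∑ i ∈ S, Polynomial.C (PowerSeries.C (lam i) * (α i).derivativeFun) *
        ∏ j ∈ S.erase i, (Polynomial.X - Polynomial.C (α j)) :
          Polynomial (PowerSeries ℂ)).coeff 0
        = -∑ i ∈ S, PowerSeries.C (lam i) * (α i).derivativeFun *
            ∏ j ∈ S.erase i, (-(α j)) := by
      rw [hcz, Polynomial.eval_neg, Polynomial.eval_finset_sum]
      refine congrArg _ (Finset.sum_congr rfl fun i _ => ?_)
      rw [Polynomial.eval_mul, Polynomial.eval_C, Polynomial.eval_prod]
      refine congrArg _ (Finset.prod_congr rfl fun j _ => ?_)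
      simp
    rw [hac, hBc]
    set Bc : PowerSeries ℂ := PowerSeries.C (lam z) * ∏ j ∈ S, (-(α j)) with hBcdef
    have hBcne : Bc ≠ 0 := by rw [← hBc]; exact hBne
    have hBcL : (Bc : LaurentSeries ℂ) ≠ 0 := coe_LS_ne_zero hBcne
    have hcoe : ((-∑ i ∈ S, PowerSeries.C (lam i) * (α i).derivativeFun *
        ∏ j ∈ S.erase i, (-(α j)) : PowerSeries ℂ) : LaurentSeries ℂ)
        = ∑ i ∈ S, -((PowerSeries.C (lam i) * (α i).derivativeFun *
            ∏ j ∈ S.erase i, (-(α j)) : PowerSeries ℂ) : LaurentSeries ℂ) := by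
      rw [map_neg, map_sum, ← Finset.sum_neg_distrib]
    rw [hcoe, Finset.sum_div]
    have hterm : ∀ i ∈ S,
        (-((PowerSeries.C (lam i) * (α i).derivativeFun *
            ∏ j ∈ S.erase i, (-(α j)) : PowerSeries ℂ) : LaurentSeries ℂ))
          / (Bc : LaurentSeries ℂ)
        = HahnSeries.C (lam i / lam z) *
            (((α i).derivativeFun : LaurentSeries ℂ) / ((α i : PowerSeries ℂ) : LaurentSeries ℂ)) := by
      intro i hi
      have hiz : i ≠ z := (Finset.mem_erase.1 hi).1
      have haL : ((α i : PowerSeries ℂ) : LaurentSeries ℂ) ≠ 0 := coe_LS_ne_zero (hαne i hiz)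
      have hCC : HahnSeries.C (lam i / lam z) * HahnSeries.C (lam z)
          = (HahnSeries.C (lam i) : LaurentSeries ℂ) := by
        rw [← map_mul, div_mul_cancel₀ _ hlam]
      have hQ : (∏ j ∈ S, (-(α j)) : PowerSeries ℂ)
          = -(α i) * ∏ j ∈ S.erase i, (-(α j)) := (Finset.mul_prod_erase S _ hi).symm
      rw [div_eq_iff hBcL, hBcdef, hQ]
      simp only [PowerSeries.coe_mul, PowerSeries.coe_C, PowerSeries.coe_neg]
      calc -(HahnSeries.C (lam i) * ((α i).derivativeFun : LaurentSeries ℂ)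
              * ((∏ j ∈ S.erase i, (-(α j)) : PowerSeries ℂ) : LaurentSeries ℂ))
          = (HahnSeries.C (lam i / lam z) * HahnSeries.C (lam z)) *
              ((((α i).derivativeFun : LaurentSeries ℂ) / ((α i : PowerSeries ℂ) : LaurentSeries ℂ))
                * ((α i : PowerSeries ℂ) : LaurentSeries ℂ)) *
              (-((∏ j ∈ S.erase i, (-(α j)) : PowerSeries ℂ) : LaurentSeries ℂ)) := by
            rw [hCC, div_mul_cancel₀ _ haL]; ring
        _ = _ := by ring
    rw [Finset.sum_congr rfl hterm]
    have hsum : ∀ f : Fin r → LaurentSeries ℂ,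
        (∑ i ∈ S, f i).coeff (-1) = ∑ i ∈ S, (f i).coeff (-1) := fun f =>
      map_sum (HahnSeries.coeff.addMonoidHom (-1 : ℤ)) f S
    rw [hsum]
    rw [Finset.mul_sum]
    refine Finset.sum_congr rfl fun i hi => ?_
    have hiz : i ≠ z := (Finset.mem_erase.1 hi).1
    rw [HahnSeries.C_mul_eq_smul, HahnSeries.coeff_smul, smul_eq_mul,
      res_logderiv (α i) (hαne i hiz) (hαconst i) (ν i) (hν i hiz)]
    ring
end

section
/- Let r, s ≥ 1, λ ∈ ℂ^r, μ ∈ ℂ^s, and assume αᵢ(0) = 0 for all i and β_j(0) = 0 for all j. Let aᵢ denote the coefficient of x in αᵢ and b_j the coefficient of x in β_j. Then every coefficient of J = A·Q − B·P of total degree strictly less than r + s − 2 vanishes (so the multiplicity of the jacobian curve at the origin is at least r + s − 2), and the coefficient of the monomial y^{r+s−2} in J equals (Σ_{i=1}^r λᵢ)·(Σ_{j=1}^s μ_j b_j) − (Σ_{j=1}^s μ_j)·(Σ_{i=1}^r λᵢ aᵢ). In particular, if (Σᵢ λᵢ)(Σ_j μ_j b_j) − (Σ_j μ_j)(Σᵢ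 λᵢ aᵢ) ≠ 0, then x = 0 is not tangent to the jacobian curve, i.e., x does not divide the lowest-degree homogeneous form of J. -/
open Polynomial

/-- `p` has order (total degree at origin) at least `n`. -/
def JOrd (p : Polynomial (PowerSeries ℂ)) (n : ℕ) : Prop :=
  ∀ i j : ℕ, i + j < n → PowerSeries.coeff i (p.coeff j) = 0

lemma jord_zero_le (p : Polynomial (PowerSeries ℂ)) : JOrd p 0 := by
  intro i j h; omega

lemma jord_mono {p : Polynomial (PowerSeries ℂ)} {m n : ℕ} (h : m ≤ n)
    (hp : JOrd p n) : JOrd p m := fun i j hij => hp i j (lt_of_lt_of_le hij h)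

lemma jord_mul {p q : Polynomial (PowerSeries ℂ)} {m n : ℕ}
    (hp : JOrd p m) (hq : JOrd q n) : JOrd (p * q) (m + n) := by
  intro i j hij
  rw [Polynomial.coeff_mul, map_sum]
  refine Finset.sum_eq_zero ?_
  rintro ⟨j1, j2⟩ hmem
  rw [Finset.HasAntidiagonal.mem_antidiagonal] at hmem
  rw [PowerSeries.coeff_mul]
  refine Finset.sum_eq_zero ?_
  rintro ⟨i1, i2⟩ hmem2
  rw [Finset.HasAntidiagonal.mem_antidiagonal] at hmem2
  simp only at hmem hmem2 ⊢
  rcases (by omega : i1 + j1 < m ∨ i2 + j2 < n) with h | h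
  · rw [hp i1 j1 h, zero_mul]
  · rw [hq i2 j2 h, mul_zero]

lemma jord_sum {ι : Type*} (s : Finset ι) (f : ι → Polynomial (PowerSeries ℂ)) {n : ℕ}
    (h : ∀ t ∈ s, JOrd (f t) n) : JOrd (∑ t ∈ s, f t) n := by
  intro i j hij
  rw [Polynomial.finset_sum_coeff, map_sum]
  exact Finset.sum_eq_zero fun t ht => h t ht i j hij

lemma jord_neg {p : Polynomial (PowerSeries ℂ)} {n : ℕ} (hp : JOrd p n) : JOrd (-p) n := by
  intro i j hij
  rw [Polynomial.coeff_neg, map_neg, hp i j hij, neg_zero]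

lemma jord_X_sub_C {α : PowerSeries ℂ} (hα : PowerSeries.constantCoeff α = 0) :
    JOrd (X - Polynomial.C α) 1 := by
  intro i j hij
  obtain ⟨rfl, rfl⟩ : i = 0 ∧ j = 0 := by omega
  simp [hα]

lemma jord_prod {ι : Type*} (s : Finset ι) (f : ι → Polynomial (PowerSeries ℂ))
    (h : ∀ t ∈ s, JOrd (f t) 1) : JOrd (∏ t ∈ s, f t) s.card := by
  induction s using Finset.cons_induction with
  | empty =>
    intro i j hij; simp at hij
  | cons t s hts ih =>
    rw [Finset.prod_cons, Finset.card_cons]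
    have := jord_mul (h t (Finset.mem_cons_self _ _))
      (ih fun u hu => h u (Finset.mem_cons_of_mem hu))
    simpa [Nat.add_comm] using this

/-- Key convolution lemma. -/
lemma jord_key {p q : Polynomial (PowerSeries ℂ)} {m n : ℕ}
    (hp : JOrd p m) (hq : JOrd q n) :
    PowerSeries.constantCoeff ((p * q).coeff (m + n)) =
      PowerSeries.constantCoeff (p.coeff m) * PowerSeries.constantCoeff (q.coeff n) := by
  rw [Polynomial.coeff_mul, map_sum]
  rw [Finset.sum_eq_single_of_mem (m, n) (by rw [Finset.HasAntidiagonal.mem_antidiagonal])]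
  · rw [map_mul]
  · rintro ⟨j1, j2⟩ hmem hne
    rw [Finset.HasAntidiagonal.mem_antidiagonal] at hmem
    simp only at hmem ⊢
    rw [map_mul, ← PowerSeries.coeff_zero_eq_constantCoeff_apply,
      ← PowerSeries.coeff_zero_eq_constantCoeff_apply]
    rcases (by by_contra hc; push_neg at hc; exact hne (by ext <;> simp <;> omega) :
        j1 < m ∨ j2 < n) with h | h
    · rw [hp 0 j1 (by omega), zero_mul]
    · rw [hq 0 j2 (by omega), mul_zero]

lemma jord_sub {p q : Polynomial (PowerSeries ℂ)} {n : ℕ}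
    (hp : JOrd p n) (hq : JOrd q n) : JOrd (p - q) n := by
  intro i j hij
  rw [Polynomial.coeff_sub, map_sub, hp i j hij, hq i j hij, sub_zero]

lemma jord_side (r : ℕ) (f : Fin r → PowerSeries ℂ) (g : Fin r → PowerSeries ℂ)
    (hg : ∀ i, PowerSeries.constantCoeff (g i) = 0) :
    JOrd (∑ i, Polynomial.C (f i) *
      ∏ j ∈ Finset.univ.erase i, (X - Polynomial.C (g j))) (r - 1) := by
  refine jord_sum _ _ fun i _ => ?_
  have hcard : (Finset.univ.erase i).card = r - 1 := by
    rw [Finset.card_erase_of_mem (Finset.mem_univ i), Finset.card_univ, Fintype.card_fin]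
  have h1 : JOrd (∏ j ∈ Finset.univ.erase i, (X - Polynomial.C (g j))) (r - 1) := by
    rw [← hcard]
    exact jord_prod _ _ fun j _ => jord_X_sub_C (hg j)
  simpa using jord_mul (jord_zero_le (Polynomial.C (f i))) h1

lemma side_coeff (r : ℕ) (f : Fin r → PowerSeries ℂ) (g : Fin r → PowerSeries ℂ) :
    PowerSeries.constantCoeff ((∑ i, Polynomial.C (f i) *
      ∏ j ∈ Finset.univ.erase i, (X - Polynomial.C (g j))).coeff (r - 1)) =
      ∑ i, PowerSeries.constantCoeff (f i) := by
  rw [Polynomial.finset_sum_coeff, map_sum]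
  refine Finset.sum_congr rfl fun i _ => ?_
  have hcard : (Finset.univ.erase i).card = r - 1 := by
    rw [Finset.card_erase_of_mem (Finset.mem_univ i), Finset.card_univ, Fintype.card_fin]
  have hmonic : (∏ j ∈ Finset.univ.erase i, (X - Polynomial.C (g j))).Monic :=
    monic_prod_of_monic _ _ fun j _ => monic_X_sub_C _
  have hdeg : (∏ j ∈ Finset.univ.erase i, (X - Polynomial.C (g j))).natDegree = r - 1 := by
    rw [Polynomial.natDegree_prod _ _ fun j _ => X_sub_C_ne_zero _]
    simp [hcard, Finset.card_eq_sum_ones]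
  have : (∏ j ∈ Finset.univ.erase i, (X - Polynomial.C (g j))).coeff (r - 1) = 1 := by
    rw [← hdeg]; exact hmonic.coeff_natDegree
  rw [Polynomial.coeff_C_mul, this, mul_one]

/-- For the jacobian `J = A·Q − B·P ∈ ℂ⟦x⟧[y]` of two logarithmic
foliations (with `αᵢ(0) = β_j(0) = 0`, and `aᵢ`, `b_j` the coefficients of `x` in
`αᵢ`, `β_j`): every coefficient of `J` of total degree `< r+s−2` vanishes (so the
multiplicity of the jacobian curve at the origin is `≥ r+s−2`); the coefficient of
the monomial `y^{r+s−2}` in `J` equals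
`(Σᵢλᵢ)(Σⱼμⱼbⱼ) − (Σⱼμⱼ)(Σᵢλᵢaᵢ)`; in particular, when this quantity is nonzero,
`x = 0` is not tangent to the jacobian curve (the lowest-degree homogeneous form of
`J` contains the monomial `y^{r+s−2}`, hence is not divisible by `x`). -/
theorem jacobian_tangent_cone_logarithmic
    (r s : ℕ) (hr : 1 ≤ r) (hs : 1 ≤ s)
    (lam : Fin r → ℂ) (mu : Fin s → ℂ)
    (α : Fin r → PowerSeries ℂ) (β : Fin s → PowerSeries ℂ)
    (hα : ∀ i, PowerSeries.constantCoeff (α i) = 0)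
    (hβ : ∀ j, PowerSeries.constantCoeff (β j) = 0)
    (a : Fin r → ℂ) (ha : ∀ i, a i = PowerSeries.coeff 1 (α i))
    (b : Fin s → ℂ) (hb : ∀ j, b j = PowerSeries.coeff 1 (β j))
    (A B P Q : Polynomial (PowerSeries ℂ))
    (hA : A = -∑ i, Polynomial.C (PowerSeries.C (lam i) * (α i).derivativeFun) *
        ∏ j ∈ Finset.univ.erase i, (Polynomial.X - Polynomial.C (α j)))
    (hB : B = ∑ i, Polynomial.C (PowerSeries.C (lam i)) *
        ∏ j ∈ Finset.univ.erase i, (Polynomial.X - Polynomial.C (α j)))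
    (hP : P = -∑ j, Polynomial.C (PowerSeries.C (mu j) * (β j).derivativeFun) *
        ∏ k ∈ Finset.univ.erase j, (Polynomial.X - Polynomial.C (β k)))
    (hQ : Q = ∑ j, Polynomial.C (PowerSeries.C (mu j)) *
        ∏ k ∈ Finset.univ.erase j, (Polynomial.X - Polynomial.C (β k)))
    (J : Polynomial (PowerSeries ℂ)) (hJ : J = A * Q - B * P) :
    (∀ i j : ℕ, i + j < r + s - 2 → PowerSeries.coeff i (J.coeff j) = 0) ∧
    PowerSeries.constantCoeff (J.coeff (r + s - 2)) =
      (∑ i, lam i) * (∑ j, mu j * b j) - (∑ j, mu j) * (∑ i, lam i * a i) ∧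
    ((∑ i, lam i) * (∑ j, mu j * b j) - (∑ j, mu j) * (∑ i, lam i * a i) ≠ 0 →
      PowerSeries.constantCoeff (J.coeff (r + s - 2)) ≠ 0) := by
  have hN : r + s - 2 = (r - 1) + (s - 1) := by omega
  have hOA : JOrd A (r - 1) := by rw [hA]; exact jord_neg (jord_side r _ α hα)
  have hOB : JOrd B (r - 1) := by rw [hB]; exact jord_side r _ α hα
  have hOP : JOrd P (s - 1) := by rw [hP]; exact jord_neg (jord_side s _ β hβ)
  have hOQ : JOrd Q (s - 1) := by rw [hQ]; exact jord_side s _ β hβ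
  have hOJ : JOrd J (r + s - 2) := by
    rw [hJ, hN]; exact jord_sub (jord_mul hOA hOQ) (jord_mul hOB hOP)
  have cderiv : ∀ (f : PowerSeries ℂ),
      PowerSeries.constantCoeff f.derivativeFun = PowerSeries.coeff 1 f := by
    intro f
    rw [← PowerSeries.coeff_zero_eq_constantCoeff_apply]
    rw [show f.derivativeFun = PowerSeries.derivative ℂ f from rfl, PowerSeries.coeff_derivative]; simp
  have cA : PowerSeries.constantCoeff (A.coeff (r - 1)) = -∑ i, lam i * a i := by
    rw [hA, Polynomial.coeff_neg, map_neg, side_coeff]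
    congr 1
    refine Finset.sum_congr rfl fun i _ => ?_
    rw [map_mul, PowerSeries.constantCoeff_C, cderiv, ha]
  have cB : PowerSeries.constantCoeff (B.coeff (r - 1)) = ∑ i, lam i := by
    rw [hB, side_coeff]
    exact Finset.sum_congr rfl fun i _ => PowerSeries.constantCoeff_C _
  have cP : PowerSeries.constantCoeff (P.coeff (s - 1)) = -∑ j, mu j * b j := by
    rw [hP, Polynomial.coeff_neg, map_neg, side_coeff]
    congr 1
    refine Finset.sum_congr rfl fun j _ => ?_
    rw [map_mul, PowerSeries.constantCoeff_C, cderiv, hb]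
  have cQ : PowerSeries.constantCoeff (Q.coeff (s - 1)) = ∑ j, mu j := by
    rw [hQ, side_coeff]
    exact Finset.sum_congr rfl fun j _ => PowerSeries.constantCoeff_C _
  have h2 : PowerSeries.constantCoeff (J.coeff (r + s - 2)) =
      (∑ i, lam i) * (∑ j, mu j * b j) - (∑ j, mu j) * (∑ i, lam i * a i) := by
    rw [hJ, hN, Polynomial.coeff_sub, map_sub, jord_key hOA hOQ, jord_key hOB hOP,
      cA, cB, cP, cQ]
    ring
  exact ⟨hOJ, h2, fun hne => h2 ▸ hne⟩
end
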